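/- arXiv:2101.10395 — 10 statements merged into one kernel-verified Lean document; each statement's English description precedes it below -/
import Mathlib

section
/- Let H be a complex Hilbert space and T a bounded operator on H with ‖T sin α + i cos α·I‖ ≤ 1 and ‖T sin α - i cos α·I‖ ≤ 1 for some α ∈ (0, π/2). Then for every f ∈ H, 2|Im ⟪T f, f⟫| ≤ tan α · (‖f‖² - ‖T f‖²); in particular T is a contraction. -/
open scoped ComplexInnerProductSpace

/-!
Expanding `‖(sin α) T f ± i (cos α) f‖² ≤ ‖f‖²` and using `sin² α + cos² α = 1` gives
`∓ 2 sin α cos α · Im ⟪T f, f⟫ ≤ sin² α (‖f‖² - ‖T f‖²)`; dividing by `sin α cos α > 0` yields the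
inequality, whose right-hand side is therefore nonnegative, so `‖T f‖ ≤ ‖f‖`.
-/

section

variable {H : Type*} [NormedAddCommGroup H] [InnerProductSpace ℂ H]

theorem norm_ofReal_smul_add_I_mul_smul_sq (s c : ℝ) (x y : H) :
    ‖(s : ℂ) • x + (Complex.I * c) • y‖ ^ 2
      = s ^ 2 * ‖x‖ ^ 2 + c ^ 2 * ‖y‖ ^ 2 - 2 * s * c * (⟪x, y⟫).im := by
  rw [@norm_add_sq ℂ, inner_smul_left, inner_smul_right, norm_smul, norm_smul]
  simp [Complex.norm_real, mul_pow, sq_abs]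
  ring

theorem sq_mul_sub_le_im_inner_of_norm_le_one {T : H →L[ℂ] H} {s c : ℝ}
    (hT : ‖(s : ℂ) • T + (Complex.I * c) • (1 : H →L[ℂ] H)‖ ≤ 1) (f : H) :
    s ^ 2 * ‖T f‖ ^ 2 + c ^ 2 * ‖f‖ ^ 2 - ‖f‖ ^ 2 ≤ 2 * s * c * (⟪T f, f⟫).im := by
  have hle : ‖(s : ℂ) • T f + (Complex.I * c) • f‖ ≤ ‖f‖ := by
    simpa using ContinuousLinearMap.le_of_opNorm_le _ hT f
  have hsq := pow_le_pow_left₀ (norm_nonneg _) hle 2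
  rw [norm_ofReal_smul_add_I_mul_smul_sq] at hsq
  linarith

end

theorem two_mul_abs_le_tan_mul_sub {α a b m : ℝ} (hα : α ∈ Set.Ioo 0 (Real.pi / 2))
    (hpos : Real.sin α ^ 2 * a + Real.cos α ^ 2 * b - b ≤ 2 * Real.sin α * Real.cos α * m)
    (hneg : Real.sin α ^ 2 * a + Real.cos α ^ 2 * b - b ≤ -(2 * Real.sin α * Real.cos α * m)) :
    2 * |m| ≤ Real.tan α * (b - a) := by
  obtain ⟨hα₀, hα₁⟩ := hα
  have hs : 0 < Real.sin α := Real.sin_pos_of_pos_of_lt_pi hα₀ (by linarith [Real.pi_pos])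
  have hc : 0 < Real.cos α := Real.cos_pos_of_mem_Ioo ⟨by linarith, hα₁⟩
  have hpyth := Real.sin_sq_add_cos_sq α
  -- since `cos² α b - b = - sin² α b`, each bound carries a common factor `sin α`
  have hcancel (x : ℝ)
      (hx : Real.sin α ^ 2 * a + Real.cos α ^ 2 * b - b ≤ -(2 * Real.sin α * Real.cos α * x)) :
      2 * Real.cos α * x ≤ Real.sin α * (b - a) := by
    refine le_of_mul_le_mul_left ?_ hs
    linear_combination hx - b * hpyth
  have hbound : 2 * Real.cos α * |m| ≤ Real.sin α * (b - a) := by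
    rcases abs_cases m with ⟨hm, _⟩ | ⟨hm, _⟩
    · rw [hm]; exact hcancel m hneg
    · rw [hm]; exact hcancel (-m) (by linarith)
  rw [Real.tan_eq_sin_div_cos, div_mul_eq_mul_div, le_div_iff₀ hc]
  linarith

theorem stmt_2_general {H : Type*} [NormedAddCommGroup H] [InnerProductSpace ℂ H]
    (T : H →L[ℂ] H) (α : ℝ) (hα : α ∈ Set.Ioo 0 (Real.pi / 2))
    (hplus : ‖((Real.sin α : ℂ)) • T + (Complex.I * (Real.cos α : ℂ)) • (1 : H →L[ℂ] H)‖ ≤ 1)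
    (hminus : ‖((Real.sin α : ℂ)) • T - (Complex.I * (Real.cos α : ℂ)) • (1 : H →L[ℂ] H)‖ ≤ 1) :
    (∀ f : H, 2 * |(⟪T f, f⟫).im| ≤ Real.tan α * (‖f‖ ^ 2 - ‖T f‖ ^ 2)) ∧ ‖T‖ ≤ 1 := by
  have hminus' : ‖((Real.sin α : ℂ)) • T
      + (Complex.I * ((-Real.cos α : ℝ) : ℂ)) • (1 : H →L[ℂ] H)‖ ≤ 1 := by
    simpa [sub_eq_add_neg] using hminus
  have hineq (f : H) : 2 * |(⟪T f, f⟫).im| ≤ Real.tan α * (‖f‖ ^ 2 - ‖T f‖ ^ 2) :=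
    two_mul_abs_le_tan_mul_sub hα (sq_mul_sub_le_im_inner_of_norm_le_one hplus f)
      (by simpa using sq_mul_sub_le_im_inner_of_norm_le_one hminus' f)
  have htan : 0 < Real.tan α := Real.tan_pos_of_pos_of_lt_pi_div_two hα.1 hα.2
  refine ⟨hineq, T.opNorm_le_bound zero_le_one fun f => ?_⟩
  have hsq : ‖T f‖ ^ 2 ≤ ‖f‖ ^ 2 := by
    nlinarith [hineq f, abs_nonneg (⟪T f, f⟫).im]
  simpa using (sq_le_sq₀ (norm_nonneg _) (norm_nonneg _)).mp hsq

/-- If `‖T sin α ± i cos α · I‖ ≤ 1` for some `α ∈ (0, π/2)`, then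
`2|Im ⟪Tf,f⟫| ≤ tan α (‖f‖² - ‖Tf‖²)` for all `f`; in particular `T` is a contraction. -/
theorem stmt_2 {H : Type*} [NormedAddCommGroup H] [InnerProductSpace ℂ H] [CompleteSpace H]
    (T : H →L[ℂ] H) (α : ℝ) (hα : α ∈ Set.Ioo 0 (Real.pi / 2))
    (hplus : ‖((Real.sin α : ℂ)) • T + (Complex.I * (Real.cos α : ℂ)) • (1 : H →L[ℂ] H)‖ ≤ 1)
    (hminus : ‖((Real.sin α : ℂ)) • T - (Complex.I * (Real.cos α : ℂ)) • (1 : H →L[ℂ] H)‖ ≤ 1) :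
    (∀ f : H, 2 * |(⟪T f, f⟫).im| ≤ Real.tan α * (‖f‖ ^ 2 - ‖T f‖ ^ 2)) ∧ ‖T‖ ≤ 1 :=
  stmt_2_general T α hα hplus hminus
end

section
/- Let F', F'' be selfadjoint contractions on a Hilbert space K and N : M → K a bounded operator with F' - F'' = 2NN*. Then for every z ∈ ℂ \ ((-∞,-1] ∪ [1,∞)), the operator I_M + 2z N*(I_K - zF')⁻¹N is invertible with inverse I_M - 2z N*(I_K - zF'')⁻¹N; equivalently, -(I_M + 2z N*(I_K - zF')⁻¹N)⁻¹ = -I_M + 2z N*(I_K - zF'')⁻¹N. -/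
/-! Writing `T' = I - zF'` and `T'' = I - zF''`, the hypothesis says `T'' - T' = 2z NN*`, and the
resolvent identity `R' - R'' = R' (T'' - T') R''` turns the cross term of the product
`(I + 2z N*R'N)(I - 2z N*R''N)` into exactly the difference of the two linear terms; the same
happens for the product in the other order. -/

open ContinuousLinearMap

section Perturbation

variable {R M K : Type*} [Ring R]
  [TopologicalSpace M] [AddCommGroup M] [IsTopologicalAddGroup M] [Module R M]
  [TopologicalSpace K] [AddCommGroup K] [IsTopologicalAddGroup K] [Module R K]

theorem ContinuousLinearMap.comp_sub_comp_eq_sub {X Y S T : K →L[R] K}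
    (hX : X ∘L S = 1) (hY : T ∘L Y = 1) : X ∘L (T - S) ∘L Y = X - Y := by
  rw [sub_comp, comp_sub, hY, ← comp_assoc, hX, one_def, comp_id, id_comp]

variable {A : K →L[R] M} {B : M →L[R] K} {T' T'' R' R'' : K →L[R] K}

theorem ContinuousLinearMap.one_add_comp_one_sub_eq_one (hT : T'' - T' = B ∘L A)
    (hR' : R' ∘L T' = 1) (hR'' : T'' ∘L R'' = 1) :
    (1 + A ∘L R' ∘L B) ∘L (1 - A ∘L R'' ∘L B) = 1 := by
  have hcross : (A ∘L R' ∘L B) ∘L (A ∘L R'' ∘L B) = A ∘L (R' ∘L (T'' - T') ∘L R'') ∘L B := by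
    simp only [hT, comp_assoc]
  rw [add_comp, comp_sub, comp_sub, hcross, comp_sub_comp_eq_sub hR' hR'', one_def,
    id_comp, id_comp, comp_id, sub_comp, comp_sub]
  abel

theorem ContinuousLinearMap.one_sub_comp_one_add_eq_one (hT : T'' - T' = B ∘L A)
    (hR' : T' ∘L R' = 1) (hR'' : R'' ∘L T'' = 1) :
    (1 - A ∘L R'' ∘L B) ∘L (1 + A ∘L R' ∘L B) = 1 := by
  have hcross : (A ∘L R'' ∘L B) ∘L (A ∘L R' ∘L B) = -(A ∘L (R'' ∘L (T' - T'') ∘L R') ∘L B) := by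
    rw [← neg_sub T'', hT]
    simp only [neg_comp, comp_neg, neg_neg, comp_assoc]
  rw [sub_comp, comp_add, comp_add, hcross, comp_sub_comp_eq_sub hR'' hR', one_def,
    comp_id, comp_id, id_comp, sub_comp, comp_sub]
  abel

end Perturbation

theorem stmt_4_general {M K : Type*} [NormedAddCommGroup M] [InnerProductSpace ℂ M] [CompleteSpace M]
    [NormedAddCommGroup K] [InnerProductSpace ℂ K] [CompleteSpace K]
    (F' F'' : K →L[ℂ] K)
    (N : M →L[ℂ] K) (hdiff : F' - F'' = (2 : ℂ) • (N ∘L N.adjoint))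
    (z : ℂ)
    (R' R'' : K →L[ℂ] K)
    (hR'1 : (1 - z • F') ∘L R' = 1) (hR'2 : R' ∘L (1 - z • F') = 1)
    (hR''1 : (1 - z • F'') ∘L R'' = 1) (hR''2 : R'' ∘L (1 - z • F'') = 1) :
    (1 + (2 * z) • (N.adjoint ∘L R' ∘L N)) ∘L (1 - (2 * z) • (N.adjoint ∘L R'' ∘L N)) = 1 ∧
    (1 - (2 * z) • (N.adjoint ∘L R'' ∘L N)) ∘L (1 + (2 * z) • (N.adjoint ∘L R' ∘L N)) = 1 := by
  have hT : (1 - z • F'') - (1 - z • F') = N ∘L ((2 * z) • N.adjoint) := by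
    rw [sub_sub_sub_cancel_left, ← smul_sub, hdiff, comp_smul, smul_smul, mul_comm]
  simp only [← smul_comp]
  exact ⟨one_add_comp_one_sub_eq_one hT hR'2 hR''1, one_sub_comp_one_add_eq_one hT hR'1 hR''2⟩

/-- If `F' - F'' = 2NN*` with `F', F''` selfadjoint contractions, then for
`z ∈ ℂ \ ((-∞,-1] ∪ [1,∞))` the operator `I + 2z N*(I - zF')⁻¹N` is invertible
with inverse `I - 2z N*(I - zF'')⁻¹N`. -/
theorem stmt_4 {M K : Type*} [NormedAddCommGroup M] [InnerProductSpace ℂ M] [CompleteSpace M]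
    [NormedAddCommGroup K] [InnerProductSpace ℂ K] [CompleteSpace K]
    (F' F'' : K →L[ℂ] K) (hF'sa : IsSelfAdjoint F') (hF''sa : IsSelfAdjoint F'')
    (hF'c : ‖F'‖ ≤ 1) (hF''c : ‖F''‖ ≤ 1)
    (N : M →L[ℂ] K) (hdiff : F' - F'' = (2 : ℂ) • (N ∘L N.adjoint))
    (z : ℂ) (hz : ¬(z.im = 0 ∧ 1 ≤ |z.re|))
    (R' R'' : K →L[ℂ] K)
    (hR'1 : (1 - z • F') ∘L R' = 1) (hR'2 : R' ∘L (1 - z • F') = 1)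
    (hR''1 : (1 - z • F'') ∘L R'' = 1) (hR''2 : R'' ∘L (1 - z • F'') = 1) :
    (1 + (2 * z) • (N.adjoint ∘L R' ∘L N)) ∘L (1 - (2 * z) • (N.adjoint ∘L R'' ∘L N)) = 1 ∧
    (1 - (2 * z) • (N.adjoint ∘L R'' ∘L N)) ∘L (1 + (2 * z) • (N.adjoint ∘L R' ∘L N)) = 1 :=
  stmt_4_general F' F'' N hdiff z R' R'' hR'1 hR'2 hR''1 hR''2
end

section
/- Let F', F'' be selfadjoint contractions on a Hilbert space K and N : M → K bounded with F' - F'' = 2NN*. Set G = (F'+F'')/2. Then for every z ∈ ℂ \ ((-∞,-1] ∪ [1,∞)), (I_M - z N*(I_K - zG)⁻¹N)⁻¹ = I_M + z N*(I_K - zF')⁻¹N. -/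
/-!
Since `(I - zG) - (I - zF') = z(F' - G) = z NN*`, the second resolvent identity gives
`RF - RG = z RG NN* RF = z RF NN* RG` for the two resolvents `RG`, `RF`. Multiplying out
`(I - z N*RG N)(I + z N*RF N)` and its reverse, the terms beyond `I` collapse to
`z N*(RF - RG - z RG NN* RF)N` and `z N*(RF - RG - z RF NN* RG)N`, both of which vanish.
-/

open ContinuousLinearMap

theorem sub_eq_mul_sub_mul_of_mul_eq_one {R : Type*} [Ring R] {a b x y : R}
    (ha : a * x = 1) (hb : y * b = 1) : b - a = a * (x - y) * b := by
  rw [mul_sub, sub_mul, ha, one_mul, mul_assoc, hb, mul_one]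

section PushThrough

variable {R E F : Type*} [Ring R]
  [TopologicalSpace E] [AddCommGroup E] [Module R E] [IsTopologicalAddGroup E]
  [TopologicalSpace F] [AddCommGroup F] [Module R F] [IsTopologicalAddGroup F]

theorem one_sub_comp_one_add_eq_one {A : F →L[R] E} {B : E →L[R] F} {P Q : F →L[R] F}
    (h : Q - P = P ∘L B ∘L A ∘L Q) :
    (1 - A ∘L P ∘L B) ∘L (1 + A ∘L Q ∘L B) = 1 := by
  have expand : (1 - A ∘L P ∘L B) ∘L (1 + A ∘L Q ∘L B) =
      1 + A ∘L (Q - P - P ∘L B ∘L A ∘L Q) ∘L B := by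
    simp only [comp_add, comp_sub, sub_comp, one_def, id_comp, comp_id, comp_assoc]
    abel
  rw [expand, h, sub_self, zero_comp, comp_zero, add_zero]

theorem one_add_comp_one_sub_eq_one {A : F →L[R] E} {B : E →L[R] F} {P Q : F →L[R] F}
    (h : Q - P = Q ∘L B ∘L A ∘L P) :
    (1 + A ∘L Q ∘L B) ∘L (1 - A ∘L P ∘L B) = 1 := by
  have expand : (1 + A ∘L Q ∘L B) ∘L (1 - A ∘L P ∘L B) =
      1 + A ∘L (Q - P - Q ∘L B ∘L A ∘L P) ∘L B := by
    simp only [add_comp, comp_sub, sub_comp, one_def, id_comp, comp_id, comp_assoc]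
    abel
  rw [expand, h, sub_self, zero_comp, comp_zero, add_zero]

end PushThrough

theorem stmt_5_general {M K : Type*} [NormedAddCommGroup M] [InnerProductSpace ℂ M] [CompleteSpace M]
    [NormedAddCommGroup K] [InnerProductSpace ℂ K] [CompleteSpace K]
    (F' F'' : K →L[ℂ] K)
    (N : M →L[ℂ] K) (hdiff : F' - F'' = (2 : ℂ) • (N ∘L N.adjoint))
    (G : K →L[ℂ] K) (hG : G = ((1 : ℂ) / 2) • (F' + F''))
    (z : ℂ)
    (RG RF : K →L[ℂ] K)
    (hRG1 : (1 - z • G) ∘L RG = 1) (hRG2 : RG ∘L (1 - z • G) = 1)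
    (hRF1 : (1 - z • F') ∘L RF = 1) (hRF2 : RF ∘L (1 - z • F') = 1) :
    (1 - z • (N.adjoint ∘L RG ∘L N)) ∘L (1 + z • (N.adjoint ∘L RF ∘L N)) = 1 ∧
    (1 + z • (N.adjoint ∘L RF ∘L N)) ∘L (1 - z • (N.adjoint ∘L RG ∘L N)) = 1 := by
  have hgap : (1 - z • G) - (1 - z • F') = (z • N) ∘L N.adjoint := by
    have : (1 - z • G) - (1 - z • F') = (z / 2) • (F' - F'') := by rw [hG]; module
    rw [this, hdiff, smul_smul, smul_comp]
    congr 1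
    ring
  have hsmul_right : ∀ R : K →L[ℂ] K, z • (N.adjoint ∘L R ∘L N) = N.adjoint ∘L R ∘L (z • N) := by
    intro R; simp only [comp_smul]
  rw [hsmul_right, hsmul_right]
  constructor
  · refine one_sub_comp_one_add_eq_one ?_
    rw [sub_eq_mul_sub_mul_of_mul_eq_one hRG2 hRF1, mul_def, mul_def, hgap]
    simp only [comp_assoc]
  · refine one_add_comp_one_sub_eq_one ?_
    rw [← neg_sub RG RF, sub_eq_mul_sub_mul_of_mul_eq_one hRF2 hRG1, ← neg_sub (1 - z • G),
      mul_neg, neg_mul, neg_neg, mul_def, mul_def, hgap]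
    simp only [comp_assoc]

/-- If `F' - F'' = 2NN*` with `F', F''` selfadjoint contractions and `G = (F'+F'')/2`,
then for `z ∈ ℂ \ ((-∞,-1] ∪ [1,∞))` one has
`(I - z N*(I - zG)⁻¹N)⁻¹ = I + z N*(I - zF')⁻¹N`. -/
theorem stmt_5 {M K : Type*} [NormedAddCommGroup M] [InnerProductSpace ℂ M] [CompleteSpace M]
    [NormedAddCommGroup K] [InnerProductSpace ℂ K] [CompleteSpace K]
    (F' F'' : K →L[ℂ] K) (hF'sa : IsSelfAdjoint F') (hF''sa : IsSelfAdjoint F'')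
    (hF'c : ‖F'‖ ≤ 1) (hF''c : ‖F''‖ ≤ 1)
    (N : M →L[ℂ] K) (hdiff : F' - F'' = (2 : ℂ) • (N ∘L N.adjoint))
    (G : K →L[ℂ] K) (hG : G = ((1 : ℂ) / 2) • (F' + F''))
    (z : ℂ) (hz : ¬(z.im = 0 ∧ 1 ≤ |z.re|))
    (RG RF : K →L[ℂ] K)
    (hRG1 : (1 - z • G) ∘L RG = 1) (hRG2 : RG ∘L (1 - z • G) = 1)
    (hRF1 : (1 - z • F') ∘L RF = 1) (hRF2 : RF ∘L (1 - z • F') = 1) :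
    (1 - z • (N.adjoint ∘L RG ∘L N)) ∘L (1 + z • (N.adjoint ∘L RF ∘L N)) = 1 ∧
    (1 + z • (N.adjoint ∘L RF ∘L N)) ∘L (1 - z • (N.adjoint ∘L RG ∘L N)) = 1 :=
  stmt_5_general F' F'' N hdiff G hG z RG RF hRG1 hRG2 hRF1 hRF2
end

section
/- Let A be a nonnegative selfadjoint operator on K and V : M → K a contraction. Then for each λ ∈ ℂ \ [0,∞), the bounded operator Q(λ) = I_M + (1+λ) V*(A - λI)⁻¹V satisfies Q(-1) = I_M, and the map x ↦ ⟪Q(x)f, f⟫ is real-valued and nondecreasing for x ∈ (-∞, 0) for every f ∈ M. -/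
open scoped ComplexOrder ComplexInnerProductSpace LinearPMap

/-!
For `x < 0` put `u = R x (V f)`; then `⟪R x (V f), V f⟫ = ⟪u, (A - x) u⟫ ≥ 0`, so the form of
`Q x` is real. For `x ≤ y < 0` let `w = R y u`; the resolvent identity `R y (V f) = u + (y - x) w`
turns `(1 + y)⟪R y (V f), V f⟫ - (1 + x)⟪R x (V f), V f⟫` into
`(y - x) (⟪u, (A + 1) u⟫ + (y - x) (⟪w, (A - y) w⟫ + ⟪A w, (A - y) w⟫))`,
a combination of forms that are nonnegative because `A ≥ 0` and `y ≤ 0`.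
-/

namespace LinearPMap

variable {K : Type*} [NormedAddCommGroup K] [InnerProductSpace ℂ K] {A : K →ₗ.[ℂ] K}

theorem inner_apply_sub_smul_self_nonneg (hnn : ∀ x : A.domain, 0 ≤ ⟪A x, (x : K)⟫)
    (p : A.domain) {c : ℝ} (hc : c ≤ 0) : 0 ≤ ⟪A p, A p - (c : ℂ) • (p : K)⟫ := by
  rw [inner_sub_right, inner_smul_right, inner_self_eq_norm_sq_to_K, sub_eq_add_neg, ← neg_mul]
  exact add_nonneg (by positivity) (mul_nonneg (by exact_mod_cast neg_nonneg.mpr hc) (hnn p))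

theorem inner_self_sub_smul_nonneg (hsym : A.IsFormalAdjoint A)
    (hnn : ∀ x : A.domain, 0 ≤ ⟪A x, (x : K)⟫)
    (p : A.domain) {c : ℝ} (hc : c ≤ 0) : 0 ≤ ⟪(p : K), A p - (c : ℂ) • (p : K)⟫ := by
  rw [inner_sub_right, inner_smul_right, ← hsym, inner_self_eq_norm_sq_to_K, sub_eq_add_neg,
    ← neg_mul]
  exact add_nonneg (hnn p) (mul_nonneg (by exact_mod_cast neg_nonneg.mpr hc) (by positivity))

theorem resolvent_identity {x y : ℂ} {g : K} {u w : A.domain} (hu : A u - x • (u : K) = g)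
    (hw : A w - y • (w : K) = u) :
    A (u + (y - x) • w) - y • ((u + (y - x) • w : A.domain) : K) = g := by
  have hAw : A w = u + y • (w : K) := eq_add_of_sub_eq hw
  rw [← hu, map_add, map_smul, Submodule.coe_add, Submodule.coe_smul, hAw]
  module

theorem one_add_mul_inner_resolvent_le (hsym : A.IsFormalAdjoint A)
    (hnn : ∀ x : A.domain, 0 ≤ ⟪A x, (x : K)⟫) {x y : ℝ} (hxy : x ≤ y) (hy : y ≤ 0) {g : K}
    {u w : A.domain} (hu : A u - (x : ℂ) • (u : K) = g) (hw : A w - (y : ℂ) • (w : K) = u) :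
    (1 + x) * ⟪(u : K), g⟫ ≤ (1 + y) * ⟪(u : K) + ((y : ℂ) - x) • (w : K), g⟫ := by
  have hug : ⟪(u : K), g⟫ = ⟪(u : K), A u⟫ - x * ⟪(u : K), u⟫ := by
    rw [← hu, inner_sub_right, inner_smul_right]
  have hwg : ⟪(w : K), g⟫ = ⟪A w, (u : K)⟫ - x * ⟪(w : K), u⟫ := by
    rw [← hu, inner_sub_right, inner_smul_right, hsym]
  have huu : ⟪(u : K), u⟫ = ⟪A w, (u : K)⟫ - y * ⟪(w : K), u⟫ := by
    nth_rewrite 1 [← hw]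
    rw [inner_sub_left, inner_smul_left, Complex.conj_ofReal]
  have hu_pos := inner_self_sub_smul_nonneg hsym hnn u (c := -1) (by norm_num)
  have hw_pos := inner_self_sub_smul_nonneg hsym hnn w hy
  have hAw_pos := inner_apply_sub_smul_self_nonneg hnn w hy
  rw [hw] at hw_pos hAw_pos
  rw [← sub_nonneg]
  have key : (1 + y) * ⟪(u : K) + ((y : ℂ) - x) • (w : K), g⟫ - (1 + x) * ⟪(u : K), g⟫ =
      (y - x) * (⟪(u : K), A u - ((-1 : ℝ) : ℂ) • (u : K)⟫ +
        (y - x) * (⟪(w : K), u⟫ + ⟪A w, (u : K)⟫)) := by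
    rw [inner_add_left, inner_smul_left, hwg, hug, inner_sub_right, inner_smul_right,
      show (starRingEnd ℂ) ((y : ℂ) - x) = y - x by simp]
    push_cast
    linear_combination (x - y) * (1 + x) * huu
  rw [key]
  have hxy' : (0 : ℂ) ≤ y - x := by exact_mod_cast sub_nonneg.mpr hxy
  exact mul_nonneg hxy' (add_nonneg hu_pos (mul_nonneg hxy' (add_nonneg hw_pos hAw_pos)))

end LinearPMap

theorem ContinuousLinearMap.inner_one_add_smul_adjoint_comp_comp_apply_self
    {M K : Type*} [NormedAddCommGroup M] [InnerProductSpace ℂ M] [CompleteSpace M]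
    [NormedAddCommGroup K] [InnerProductSpace ℂ K] [CompleteSpace K]
    (V : M →L[ℂ] K) (T : K →L[ℂ] K) (x : ℝ) (f : M) :
    ⟪(1 + (1 + (x : ℂ)) • (V.adjoint ∘L T ∘L V)) f, f⟫ =
      ((‖f‖ ^ 2 : ℝ) : ℂ) + (1 + x) * ⟪T (V f), V f⟫ := by
  simp only [add_apply, one_apply_eq_self, smul_apply, comp_apply]
  rw [inner_add_left, inner_smul_left, adjoint_inner_left, inner_self_eq_norm_sq_to_K]
  simp

theorem stmt_7_general {M K : Type*} [NormedAddCommGroup M] [InnerProductSpace ℂ M] [CompleteSpace M]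
    [NormedAddCommGroup K] [InnerProductSpace ℂ K] [CompleteSpace K]
    (A : K →ₗ.[ℂ] K) (hsa : IsSelfAdjoint A)
    (hnn : ∀ x : A.domain, 0 ≤ ⟪A x, (x : K)⟫)
    (V : M →L[ℂ] K)
    (R : ℂ → (K →L[ℂ] K))
    (hR : ∀ lam : ℂ, ¬(lam.im = 0 ∧ 0 ≤ lam.re) →
      (∀ y : K, ∃ h : R lam y ∈ A.domain, A ⟨R lam y, h⟩ - lam • R lam y = y) ∧
      (∀ x : A.domain, R lam (A x - lam • (x : K)) = x))
    (Q : ℂ → (M →L[ℂ] M))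
    (hQ : ∀ lam : ℂ, Q lam = 1 + (1 + lam) • (V.adjoint ∘L R lam ∘L V)) :
    Q (-1) = 1 ∧
    ∀ f : M,
      (∀ x : ℝ, x < 0 → (⟪Q (x : ℂ) f, f⟫).im = 0) ∧
      MonotoneOn (fun x : ℝ => (⟪Q (x : ℂ) f, f⟫).re) (Set.Iio (0 : ℝ)) := by
  have hsym : A.IsFormalAdjoint A := by
    simpa only [LinearPMap.isSelfAdjoint_def.mp hsa] using
      LinearPMap.adjoint_isFormalAdjoint hsa.dense_domain
  have hR' (x : ℝ) (hx : x < 0) := hR x fun h => by simp only [Complex.ofReal_re] at h; linarith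
  have hQf (x : ℝ) (f : M) :
      ⟪Q x f, f⟫ = ((‖f‖ ^ 2 : ℝ) : ℂ) + (1 + x) * ⟪R x (V f), V f⟫ := by
    rw [hQ, ContinuousLinearMap.inner_one_add_smul_adjoint_comp_comp_apply_self]
  refine ⟨by simp [hQ], fun f => ⟨fun x hx => ?_, fun x hx y hy hxy => ?_⟩⟩
  · obtain ⟨hu, hAu⟩ := (hR' x hx).1 (V f)
    have hpos := LinearPMap.inner_self_sub_smul_nonneg hsym hnn ⟨_, hu⟩ hx.le
    rw [hAu] at hpos
    rw [hQf, Complex.add_im, Complex.ofReal_im, Complex.mul_im, ← (Complex.nonneg_iff.mp hpos).2]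
    simp
  · obtain ⟨hu, hAu⟩ := (hR' x hx).1 (V f)
    obtain ⟨hw, hAw⟩ := (hR' y hy).1 (R x (V f))
    have hRy := (hR' y hy).2 (⟨_, hu⟩ + ((y : ℂ) - x) • ⟨_, hw⟩)
    rw [LinearPMap.resolvent_identity hAu hAw] at hRy
    have hle := LinearPMap.one_add_mul_inner_resolvent_le hsym hnn hxy hy.le hAu hAw
    simp only [hQf, hRy, Submodule.coe_add, Submodule.coe_smul]
    exact (Complex.le_def.mp (add_le_add le_rfl hle)).1

/-- Let `A` be a nonnegative selfadjoint operator on `K` (resolvents encoded by `R`)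
and `V : M → K` a contraction.  Then `Q(λ) = I + (1+λ)V*(A-λ)⁻¹V` satisfies
`Q(-1) = I`, and `x ↦ ⟪Q(x)f,f⟫` is real-valued and nondecreasing on `(-∞,0)`. -/
theorem stmt_7 {M K : Type*} [NormedAddCommGroup M] [InnerProductSpace ℂ M] [CompleteSpace M]
    [NormedAddCommGroup K] [InnerProductSpace ℂ K] [CompleteSpace K]
    (A : K →ₗ.[ℂ] K) (hsa : IsSelfAdjoint A)
    (hnn : ∀ x : A.domain, 0 ≤ ⟪A x, (x : K)⟫)
    (V : M →L[ℂ] K) (hV : ‖V‖ ≤ 1)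
    (R : ℂ → (K →L[ℂ] K))
    (hR : ∀ lam : ℂ, ¬(lam.im = 0 ∧ 0 ≤ lam.re) →
      (∀ y : K, ∃ h : R lam y ∈ A.domain, A ⟨R lam y, h⟩ - lam • R lam y = y) ∧
      (∀ x : A.domain, R lam (A x - lam • (x : K)) = x))
    (Q : ℂ → (M →L[ℂ] M))
    (hQ : ∀ lam : ℂ, Q lam = 1 + (1 + lam) • (V.adjoint ∘L R lam ∘L V)) :
    Q (-1) = 1 ∧
    ∀ f : M,
      (∀ x : ℝ, x < 0 → (⟪Q (x : ℂ) f, f⟫).im = 0) ∧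
      MonotoneOn (fun x : ℝ => (⟪Q (x : ℂ) f, f⟫).re) (Set.Iio (0 : ℝ)) :=
  stmt_7_general A hsa hnn V R hR Q hQ
end

section
/- Let A be a nonnegative selfadjoint operator on K and V : M → K a contraction. Then for every x < 0 and f ∈ M, ⟪(I_M + (1+x)V*(A - xI)⁻¹V) f, f⟫ ≥ 0, i.e. Q(x) = I_M + (1+x)V*(A-xI)⁻¹V is a nonnegative selfadjoint bounded operator. -/
open scoped ComplexOrder ComplexInnerProductSpace LinearPMap

/-!
The resolvent `R = (A - x)⁻¹` is symmetric, and since `1 + (1 + x) R = (A + 1) R`, for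
`g = (A - x) u` we get `re ⟪(1 + (1 + x) R) g, g⟫ = ‖A u‖² + (1 - x) re ⟪A u, u⟫ - x ‖u‖² ≥ 0`.
Hence `Q = (1 - V* V) + V* (1 + (1 + x) R) V` is a sum of two positive operators, the first one
because `V` is a contraction.
-/

open scoped InnerProductSpace
open RCLike ComplexConjugate

namespace LinearPMap

variable {𝕜 E : Type*} [RCLike 𝕜] [NormedAddCommGroup E] [InnerProductSpace 𝕜 E]

theorem _root_.IsSelfAdjoint.isFormalAdjoint_self [CompleteSpace E] {A : E →ₗ.[𝕜] E}
    (hA : IsSelfAdjoint A) : A.IsFormalAdjoint A := by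
  have h := adjoint_isFormalAdjoint hA.dense_domain
  rwa [isSelfAdjoint_def.mp hA] at h

variable {A : E →ₗ.[𝕜] E} {x : ℝ}

theorem IsFormalAdjoint.inner_sub_ofReal_smul (hA : A.IsFormalAdjoint A) (u v : A.domain) :
    ⟪A u - (x : 𝕜) • (u : E), v⟫_𝕜 = ⟪(u : E), A v - (x : 𝕜) • (v : E)⟫_𝕜 := by
  rw [inner_sub_left, inner_sub_right, inner_smul_left, inner_smul_right, conj_ofReal, hA]

theorem IsFormalAdjoint.isSymmetric_of_rightInverse (hA : A.IsFormalAdjoint A)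
    {R : E →ₗ[𝕜] E} (hR : ∀ y, ∃ h : R y ∈ A.domain, A ⟨R y, h⟩ - (x : 𝕜) • R y = y) :
    R.IsSymmetric := by
  intro y z
  obtain ⟨hy, hRy⟩ := hR y
  obtain ⟨hz, hRz⟩ := hR z
  conv_lhs => rw [← hRz]
  conv_rhs => rw [← hRy]
  exact (hA.inner_sub_ofReal_smul ⟨R y, hy⟩ ⟨R z, hz⟩).symm

theorem IsFormalAdjoint.isPositive_one_add_smul_of_rightInverse [CompleteSpace E]
    (hA : A.IsFormalAdjoint A) (hA_nonneg : ∀ u : A.domain, 0 ≤ re ⟪A u, (u : E)⟫_𝕜)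
    (hx : x ≤ 0) {R : E →L[𝕜] E}
    (hR : ∀ y, ∃ h : R y ∈ A.domain, A ⟨R y, h⟩ - (x : 𝕜) • R y = y) :
    (1 + ((1 : 𝕜) + x) • R).IsPositive := by
  refine ⟨?_, fun g => ?_⟩
  · have hc : conj ((1 : 𝕜) + x) = 1 + x := by simp
    exact LinearMap.IsSymmetric.add (ContinuousLinearMap.isPositive_one.isSymmetric)
      ((hA.isSymmetric_of_rightInverse hR).smul hc)
  obtain ⟨hu, hRg⟩ := hR g
  set u : A.domain := ⟨R g, hu⟩
  have hQg : (1 + ((1 : 𝕜) + x) • R) g = A u + (u : E) := calc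
    g + ((1 : 𝕜) + x) • (u : E) = (A u - (x : 𝕜) • (u : E)) + ((1 : 𝕜) + x) • (u : E) := by
      rw [hRg]
    _ = A u + (u : E) := by module
  have hform : re ⟪A u + (u : E), A u - (x : 𝕜) • (u : E)⟫_𝕜
      = ‖A u‖ ^ 2 + (1 - x) * re ⟪A u, (u : E)⟫_𝕜 - x * ‖(u : E)‖ ^ 2 := by
    rw [inner_add_left, inner_sub_right, inner_sub_right, inner_smul_right, inner_smul_right,
      inner_self_eq_norm_sq_to_K, inner_self_eq_norm_sq_to_K]
    simp only [_root_.map_add, _root_.map_sub, re_ofReal_mul, ← ofReal_pow, ofReal_re]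
    rw [inner_re_symm (u : E)]
    ring
  rw [ContinuousLinearMap.reApplyInnerSelf_apply, hQg, ← hRg, hform]
  have hAu := hA_nonneg u
  nlinarith [sq_nonneg ‖A u‖, sq_nonneg ‖(u : E)‖]

end LinearPMap

namespace ContinuousLinearMap

variable {𝕜 E F : Type*} [RCLike 𝕜] [NormedAddCommGroup E] [InnerProductSpace 𝕜 E]
  [NormedAddCommGroup F] [InnerProductSpace 𝕜 F] [CompleteSpace E] [CompleteSpace F]

theorem isPositive_one_sub_adjoint_comp_self {V : E →L[𝕜] F} (hV : ‖V‖ ≤ 1) :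
    (1 - V.adjoint ∘L V).IsPositive := by
  refine ⟨isPositive_one.isSymmetric.sub (isPositive_adjoint_comp_self V).isSymmetric,
    fun f => ?_⟩
  rw [reApplyInnerSelf_apply, sub_apply, one_apply_eq_self, comp_apply, inner_sub_left,
    adjoint_inner_left, _root_.map_sub, inner_self_eq_norm_sq, inner_self_eq_norm_sq, sub_nonneg]
  have hVf : ‖V f‖ ≤ ‖f‖ := by simpa using V.le_of_opNorm_le hV f
  gcongr

end ContinuousLinearMap

theorem stmt_8_general {M K : Type*} [NormedAddCommGroup M] [InnerProductSpace ℂ M] [CompleteSpace M]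
    [NormedAddCommGroup K] [InnerProductSpace ℂ K] [CompleteSpace K]
    (A : K →ₗ.[ℂ] K) (hsa : IsSelfAdjoint A)
    (hnn : ∀ x : A.domain, 0 ≤ ⟪A x, (x : K)⟫)
    (V : M →L[ℂ] K) (hV : ‖V‖ ≤ 1)
    (x : ℝ) (hx : x < 0)
    (R : K →L[ℂ] K)
    (hR1 : ∀ y : K, ∃ h : R y ∈ A.domain, A ⟨R y, h⟩ - (x : ℂ) • R y = y)
    (Q : M →L[ℂ] M) (hQ : Q = 1 + ((1 : ℂ) + x) • (V.adjoint ∘L R ∘L V)) :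
    IsSelfAdjoint Q ∧ ∀ f : M, 0 ≤ ⟪Q f, f⟫ := by
  have hP : (1 + ((1 : ℂ) + x) • R).IsPositive :=
    hsa.isFormalAdjoint_self.isPositive_one_add_smul_of_rightInverse
      (fun u => (Complex.nonneg_iff.mp (hnn u)).1) hx.le hR1
  have hQ_eq : Q = (1 - V.adjoint ∘L V) + V.adjoint ∘L (1 + ((1 : ℂ) + x) • R) ∘L V := by
    rw [hQ]
    ext f
    simp only [add_apply, sub_apply, smul_apply, ContinuousLinearMap.comp_apply,
      one_apply_eq_self, map_add, map_smul]
    abel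
  rw [← ContinuousLinearMap.isPositive_iff', hQ_eq]
  exact (ContinuousLinearMap.isPositive_one_sub_adjoint_comp_self hV).add (hP.adjoint_conj V)

/-- Let `A` be a nonnegative selfadjoint operator on `K` and `V : M → K` a contraction.
Then for every `x < 0` the operator `Q(x) = I + (1+x)V*(A-x)⁻¹V` is a nonnegative
selfadjoint bounded operator: `⟪Q(x)f, f⟫ ≥ 0` for all `f`. -/
theorem stmt_8 {M K : Type*} [NormedAddCommGroup M] [InnerProductSpace ℂ M] [CompleteSpace M]
    [NormedAddCommGroup K] [InnerProductSpace ℂ K] [CompleteSpace K]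
    (A : K →ₗ.[ℂ] K) (hsa : IsSelfAdjoint A)
    (hnn : ∀ x : A.domain, 0 ≤ ⟪A x, (x : K)⟫)
    (V : M →L[ℂ] K) (hV : ‖V‖ ≤ 1)
    (x : ℝ) (hx : x < 0)
    (R : K →L[ℂ] K)
    (hR1 : ∀ y : K, ∃ h : R y ∈ A.domain, A ⟨R y, h⟩ - (x : ℂ) • R y = y)
    (hR2 : ∀ u : A.domain, R (A u - (x : ℂ) • (u : K)) = u)
    (Q : M →L[ℂ] M) (hQ : Q = 1 + ((1 : ℂ) + x) • (V.adjoint ∘L R ∘L V)) :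
    IsSelfAdjoint Q ∧ ∀ f : M, 0 ≤ ⟪Q f, f⟫ :=
  stmt_8_general A hsa hnn V hV x hx R hR1 Q hQ
end

section
/- Let A be a nonnegative selfadjoint operator on K, and V : M → K a contraction. For λ ∈ ℂ \ [0,∞), the operator A - λI + (1+λ)VV* is boundedly invertible and -(I_M + (1+λ)V*(A-λI)⁻¹V)⁻¹ = -I_M + (1+λ)V*(A - λI + (1+λ)VV*)⁻¹V. -/
open scoped ComplexOrder ComplexInnerProductSpace LinearPMap

open scoped ComplexOrder

lemma key_ineq (lam : ℂ) (hlam : ¬(lam.im = 0 ∧ 0 ≤ lam.re)) :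
    ∃ c : ℝ, 0 < c ∧ ∀ t a w : ℝ, 0 ≤ t → 0 ≤ a → 0 ≤ w →
      (a - lam.re * w)^2 + (lam.im * w)^2 ≤ w * t →
      c * t ≤ ‖(t : ℂ) + (1 + lam) * ((a : ℂ) - (starRingEnd ℂ) lam * (w : ℂ))‖ := by
  set α := lam.re with hα
  set β := lam.im with hβ
  have hre : ∀ t a w : ℝ, ((t : ℂ) + (1 + lam) * ((a : ℂ) - (starRingEnd ℂ) lam * (w : ℂ))).re
      = t + (1+α)*a - (α+α^2+β^2)*w := by
    intro t a w
    simp [Complex.add_re, Complex.mul_re, Complex.sub_re, Complex.sub_im, Complex.mul_im,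
      Complex.conj_re, Complex.conj_im]
    ring
  have him : ∀ t a w : ℝ, ((t : ℂ) + (1 + lam) * ((a : ℂ) - (starRingEnd ℂ) lam * (w : ℂ))).im
      = β*(a+w) := by
    intro t a w
    simp [Complex.add_im, Complex.mul_re, Complex.sub_re, Complex.sub_im, Complex.mul_im,
      Complex.conj_re, Complex.conj_im]
    ring
  by_cases hb : β = 0
  · -- real negative case
    have hneg : α < 0 := by
      by_contra h
      exact hlam ⟨hb, le_of_not_gt h⟩
    by_cases h1 : -1 ≤ α
    · refine ⟨1, one_pos, fun t a w ht ha hw hcon => ?_⟩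
      set q := ((t : ℂ) + (1 + lam) * ((a : ℂ) - (starRingEnd ℂ) lam * (w : ℂ)))
      have h2 : t ≤ q.re := by
        rw [hre, hb]
        nlinarith [mul_nonneg (by linarith : (0:ℝ) ≤ 1+α) ha,
          mul_nonneg (mul_nonneg (by linarith : (0:ℝ) ≤ -α) (by linarith : (0:ℝ) ≤ 1+α)) hw]
      calc 1 * t = t := one_mul t
        _ ≤ q.re := h2
        _ ≤ |q.re| := le_abs_self _
        _ ≤ ‖q‖ := Complex.abs_re_le_norm q
    · push_neg at h1
      have hc : (0:ℝ) < -1/α := by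
        rw [show (-1/α : ℝ) = 1/(-α) by ring]
        have : (0:ℝ) < -α := by linarith
        positivity
      refine ⟨-1/α, hc, fun t a w ht ha hw hcon => ?_⟩
      set q := ((t : ℂ) + (1 + lam) * ((a : ℂ) - (starRingEnd ℂ) lam * (w : ℂ)))
      have hcon' : (a - α*w)^2 ≤ w * t := by
        rw [hb] at hcon; simpa using hcon
      have hz : 0 ≤ a - α*w := by nlinarith
      have hkey : (-α) * (a - α*w) ≤ t := by
        rcases eq_or_lt_of_le hz with h0 | h0
        · rw [← h0]; simpa using ht
        · have h2 : (-α)*(a-α*w)^2 ≤ (a - α*w)*t := by nlinarith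
          nlinarith
      have goal' : t ≤ (-α) * (t + (1+α)*a - (α+α^2+0^2)*w) := by
        nlinarith [mul_nonneg (by linarith : (0:ℝ) ≤ -α - 1)
          (by linarith [hkey] : (0:ℝ) ≤ t - (-α)*(a-α*w))]
      have h2 : (-1/α) * t ≤ q.re := by
        rw [hre, hb]
        rw [div_mul_eq_mul_div, div_le_iff_of_neg (show α < 0 by linarith)]
        nlinarith [goal']
      calc (-1/α) * t ≤ q.re := h2
        _ ≤ |q.re| := le_abs_self _
        _ ≤ ‖q‖ := Complex.abs_re_le_norm q
  · -- nonreal case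
    set γ := α^2 + α + β^2 with hγ
    refine ⟨|β| / (|β| + |γ|), by positivity, fun t a w ht ha hw hcon => ?_⟩
    set q := ((t : ℂ) + (1 + lam) * ((a : ℂ) - (starRingEnd ℂ) lam * (w : ℂ)))
    have hid : β*q.re + γ*q.im = β*(t + ((1+α)^2+β^2)*a) := by
      rw [hre, him]; ring
    have h1 : |β| * t ≤ |β * q.re + γ * q.im| := by
      rw [hid, abs_mul]
      have h3 : t ≤ |t + ((1+α)^2+β^2)*a| := by
        have : t ≤ t + ((1+α)^2+β^2)*a := by nlinarith [sq_nonneg (1+α), sq_nonneg β]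
        exact this.trans (le_abs_self _)
      exact mul_le_mul_of_nonneg_left h3 (abs_nonneg β)
    have h2 : |β * q.re + γ * q.im| ≤ (|β| + |γ|) * ‖q‖ := by
      calc |β * q.re + γ * q.im| ≤ |β * q.re| + |γ * q.im| := abs_add_le _ _
        _ = |β| * |q.re| + |γ| * |q.im| := by rw [abs_mul, abs_mul]
        _ ≤ |β| * ‖q‖ + |γ| * ‖q‖ := by
            gcongr
            exacts [Complex.abs_re_le_norm q, Complex.abs_im_le_norm q]
        _ = (|β| + |γ|) * ‖q‖ := by ring
    rw [div_mul_eq_mul_div, div_le_iff₀ (by positivity)]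
    calc |β| * t ≤ (|β| + |γ|) * ‖q‖ := h1.trans h2
      _ = ‖q‖ * (|β| + |γ|) := mul_comm _ _

set_option maxHeartbeats 1000000 in
/-- For `λ ∈ ℂ \ [0,∞)`, the operator `A - λI + (1+λ)VV*` is boundedly invertible and
`-(I + (1+λ)V*(A-λ)⁻¹V)⁻¹ = -I + (1+λ)V*(A - λI + (1+λ)VV*)⁻¹V`. -/
theorem stmt_9 {M K : Type*} [NormedAddCommGroup M] [InnerProductSpace ℂ M] [CompleteSpace M]
    [NormedAddCommGroup K] [InnerProductSpace ℂ K] [CompleteSpace K]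
    (A : K →ₗ.[ℂ] K) (hsa : IsSelfAdjoint A)
    (hnn : ∀ x : A.domain, 0 ≤ ⟪A x, (x : K)⟫)
    (V : M →L[ℂ] K) (hV : ‖V‖ ≤ 1)
    (lam : ℂ) (hlam : ¬(lam.im = 0 ∧ 0 ≤ lam.re))
    (R : K →L[ℂ] K)
    (hR1 : ∀ y : K, ∃ h : R y ∈ A.domain, A ⟨R y, h⟩ - lam • R y = y)
    (hR2 : ∀ u : A.domain, R (A u - lam • (u : K)) = u)
    (Q : M →L[ℂ] M) (hQ : Q = 1 + (1 + lam) • (V.adjoint ∘L R ∘L V)) :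
    ∃ S : K →L[ℂ] K,
      (∀ y : K, ∃ h : S y ∈ A.domain,
        A ⟨S y, h⟩ - lam • S y + (1 + lam) • V (V.adjoint (S y)) = y) ∧
      (∀ u : A.domain, S (A u - lam • (u : K) + (1 + lam) • V (V.adjoint (u : K))) = u) ∧
      Q ∘L (1 - (1 + lam) • (V.adjoint ∘L S ∘L V)) = 1 ∧
      (1 - (1 + lam) • (V.adjoint ∘L S ∘L V)) ∘L Q = 1 := by
  obtain ⟨c, hc, hkey2⟩ := key_ineq lam hlam
  -- the numerical range bound for Q
  have hbound : ∀ x : M, ‖x‖ ^ 2 * c ≤ ‖⟪Q x, x⟫‖ := by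
    intro x
    obtain ⟨hu, heq⟩ := hR1 (V x)
    set u : K := R (V x) with hudef
    have hAuu : (0:ℂ) ≤ ⟪A ⟨u, hu⟩, (u : K)⟫ := hnn ⟨u, hu⟩
    set a : ℝ := (⟪A ⟨u, hu⟩, (u : K)⟫).re with hadef
    have ha0 : 0 ≤ a := (Complex.nonneg_iff.mp hAuu).1
    have haim : ⟪A ⟨u, hu⟩, (u : K)⟫ = (a : ℂ) := by
      apply Complex.ext
      · simp [hadef]
      · simpa using ((Complex.nonneg_iff.mp hAuu).2).symm
    set w : ℝ := ‖u‖ ^ 2 with hwdef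
    set t : ℝ := ‖x‖ ^ 2 with htdef
    have hinner : ⟪u, V x⟫ = (a : ℂ) - lam * w := by
      rw [← heq, inner_sub_right, inner_smul_right, ← inner_conj_symm u, haim]
      rw [inner_self_eq_norm_sq_to_K]
      push_cast [hwdef]
      simp
    have hQx : ⟪Q x, x⟫ = (t : ℂ) + (starRingEnd ℂ) (1 + lam) * ((a : ℂ) - lam * w) := by
      have e1 : Q x = x + (1 + lam) • (V.adjoint (R (V x))) := by
        rw [hQ]; simp
      have hxx : (⟪x, x⟫ : ℂ) = (t : ℂ) := by
        rw [inner_self_eq_norm_sq_to_K, htdef]; norm_cast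
      rw [e1, inner_add_left, inner_smul_left, ContinuousLinearMap.adjoint_inner_left,
        ← hudef, hinner, hxx]
    have habs : ‖⟪Q x, x⟫‖
        = ‖(t : ℂ) + (1 + lam) * ((a : ℂ) - (starRingEnd ℂ) lam * (w : ℂ))‖ := by
      rw [hQx,
        show (t : ℂ) + (starRingEnd ℂ) (1 + lam) * ((a : ℂ) - lam * w)
          = (starRingEnd ℂ) ((t : ℂ) + (1 + lam) * ((a : ℂ) - (starRingEnd ℂ) lam * (w : ℂ)))
          by simp [map_add, map_mul, map_sub, Complex.conj_ofReal],
        Complex.norm_conj]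
    have hcon : (a - lam.re * w) ^ 2 + (lam.im * w) ^ 2 ≤ w * t := by
      have h1 : ‖⟪u, V x⟫‖ ≤ ‖u‖ * ‖V x‖ := norm_inner_le_norm u (V x)
      have h2 : ‖V x‖ ≤ ‖x‖ := by
        calc ‖V x‖ ≤ ‖V‖ * ‖x‖ := V.le_opNorm x
          _ ≤ 1 * ‖x‖ := by gcongr
          _ = ‖x‖ := one_mul _
      have h4 : ‖⟪u, V x⟫‖ ≤ ‖u‖ * ‖x‖ :=
        h1.trans (mul_le_mul_of_nonneg_left h2 (norm_nonneg u))
      have h3 : ‖⟪u, V x⟫‖ ^ 2 ≤ w * t := by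
        rw [hwdef, htdef]
        nlinarith [norm_nonneg (⟪u, V x⟫ : ℂ), norm_nonneg u, norm_nonneg x,
          mul_nonneg (norm_nonneg u) (norm_nonneg x)]
      calc (a - lam.re * w) ^ 2 + (lam.im * w) ^ 2 = ‖⟪u, V x⟫‖ ^ 2 := by
            rw [hinner, Complex.sq_norm, Complex.normSq_apply]
            simp [Complex.sub_re, Complex.sub_im, Complex.mul_re, Complex.mul_im]
            ring
        _ ≤ w * t := h3
    have := hkey2 t a w (by positivity) ha0 (by positivity) hcon
    rw [habs, mul_comm]
    exact this
  -- Q is invertible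
  have hcnn : (0 : NNReal) < ⟨c, hc.le⟩ := hc
  have hQunit : IsUnit Q :=
    ContinuousLinearMap.isUnit_of_forall_le_norm_inner_map Q (c := ⟨c, hc.le⟩) hcnn hbound
  obtain ⟨Q', hQQ', hQ'Q⟩ : ∃ Q' : M →L[ℂ] M, Q ∘L Q' = 1 ∧ Q' ∘L Q = 1 := by
    obtain ⟨uQ, huQ⟩ := hQunit
    refine ⟨↑uQ⁻¹, ?_, ?_⟩
    · rw [← ContinuousLinearMap.mul_def, ← huQ]; exact uQ.mul_inv
    · rw [← ContinuousLinearMap.mul_def, ← huQ]; exact uQ.inv_mul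
  have hQQ'p : ∀ z : M, Q (Q' z) = z := fun z => by
    rw [← ContinuousLinearMap.comp_apply, hQQ', ContinuousLinearMap.one_apply]
  have hQ'Qp : ∀ z : M, Q' (Q z) = z := fun z => by
    rw [← ContinuousLinearMap.comp_apply, hQ'Q, ContinuousLinearMap.one_apply]
  have hop : ∀ z : M, (1 + lam) • V.adjoint (R (V z)) = Q z - z := by
    intro z
    rw [hQ]
    simp
  set S : K →L[ℂ] K := R - (1 + lam) • (R ∘L V ∘L Q' ∘L V.adjoint ∘L R) with hSdef
  have hSapp : ∀ y : K, S y = R y - (1 + lam) • R (V (Q' (V.adjoint (R y)))) := by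
    intro y; rw [hSdef]; simp
  have hVS : ∀ y : K, V.adjoint (S y) = Q' (V.adjoint (R y)) := by
    intro y
    rw [hSapp y, map_sub, map_smul, hop (Q' (V.adjoint (R y))), hQQ'p]
    abel
  have hres : (1 : M →L[ℂ] M) - (1 + lam) • (V.adjoint ∘L S ∘L V) = Q' := by
    ext x
    simp only [ContinuousLinearMap.sub_apply, ContinuousLinearMap.one_apply,
      ContinuousLinearMap.smul_apply, ContinuousLinearMap.comp_apply]
    rw [hVS (V x)]
    have h3 : (1 + lam) • Q' (V.adjoint (R (V x))) = x - Q' x := by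
      rw [← map_smul, hop x, map_sub, hQ'Qp]
    rw [h3]
    abel
  refine ⟨S, ?_, ?_, ?_, ?_⟩
  · intro y
    obtain ⟨hmem, heq⟩ := hR1 (y - (1 + lam) • V (Q' (V.adjoint (R y))))
    have hSy : S y = R (y - (1 + lam) • V (Q' (V.adjoint (R y)))) := by
      rw [map_sub, map_smul, hSapp y]
    rw [hSy]
    refine ⟨hmem, ?_⟩
    rw [heq]
    have h1 : V.adjoint (R (y - (1 + lam) • V (Q' (V.adjoint (R y)))))
        = Q' (V.adjoint (R y)) := by
      rw [← hSy, hVS y]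
    rw [h1]
    abel
  · intro u
    have hRy : R (A u - lam • (u : K) + (1 + lam) • V (V.adjoint (u : K)))
        = (u : K) + (1 + lam) • R (V (V.adjoint (u : K))) := by
      rw [map_add, hR2 u, map_smul]
    have h2 : V.adjoint (R (A u - lam • (u : K) + (1 + lam) • V (V.adjoint (u : K))))
        = Q (V.adjoint (u : K)) := by
      rw [hRy, map_add, map_smul, hop (V.adjoint (u : K))]
      abel
    rw [hSapp _, h2, hQ'Qp, hRy]
    abel
  · rw [hres]
    exact hQQ'
  · rw [hres]
    exact hQ'Q
end

section
/- Let λ ∈ ℂ with 0 < arg λ < π/2 and let w ∈ ℂ satisfy 0 ≤ arg w ≤ π (i.e. Im w ≥ 0) and 0 ≤ arg(λw) ≤ π (i.e. Im(λw) ≥ 0). Then |arg(e^{-i(π-arg λ)/2} w)| ≤ (π - arg λ)/2. -/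
/-!
Since `Im w ≥ 0` and `Im (λ w) ≥ 0`, the angle `arg w` lies in `[0, π - arg λ]`: otherwise
`arg λ + arg w ∈ (π, 2π)` and `Im (λ w) = ‖λ w‖ sin (arg λ + arg w) < 0`. Rotating by
`-(π - arg λ)/2` moves this interval onto the symmetric one `[-(π - arg λ)/2, (π - arg λ)/2]`.
-/

open Complex Real

namespace Complex

lemma im_mul_eq_norm_mul_sin_add_arg {x y : ℂ} (hx : x ≠ 0) (hy : y ≠ 0) :
    (x * y).im = ‖x * y‖ * Real.sin (x.arg + y.arg) := by
  rw [← norm_mul_sin_arg, ← Real.Angle.sin_coe, arg_mul_coe_angle hx hy, ← Real.Angle.coe_add,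
    Real.Angle.sin_coe]

lemma arg_le_pi_sub_arg_of_im_nonneg {l w : ℂ} (hl : l.arg < π) (hw : 0 ≤ w.im)
    (hlw : 0 ≤ (l * w).im) : w.arg ≤ π - l.arg := by
  by_contra! h
  have hw0 : w ≠ 0 := by rintro rfl; simp only [arg_zero] at h; linarith
  have hl0 : l ≠ 0 := by rintro rfl; simp only [arg_zero] at h; linarith [arg_le_pi w]
  have hsin : Real.sin (l.arg + w.arg) < 0 := by
    rw [← Real.sin_sub_two_pi]
    exact sin_neg_of_neg_of_neg_pi_lt (by linarith [arg_le_pi w]) (by linarith)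
  have hnorm : 0 < ‖l * w‖ := norm_pos_iff.2 (mul_ne_zero hl0 hw0)
  rw [im_mul_eq_norm_mul_sin_add_arg hl0 hw0] at hlw
  nlinarith

lemma arg_exp_neg_mul_I_mul {w : ℂ} (hw : w ≠ 0) {φ : ℝ} (h : w.arg - φ ∈ Set.Ioc (-π) π) :
    (exp (-I * φ) * w).arg = w.arg - φ := by
  have hrot : exp (-I * φ) * w = ‖w‖ * (cos ↑(w.arg - φ) + sin ↑(w.arg - φ) * I) := by
    conv_lhs => rw [← norm_mul_exp_arg_mul_I w]
    rw [← exp_mul_I, mul_left_comm, ← exp_add]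
    push_cast
    ring_nf
  rw [hrot, arg_mul_cos_add_sin_mul_I (norm_pos_iff.2 hw) h]

end Complex

theorem stmt_11_general (l w : ℂ) (h2 : l.arg < Real.pi / 2)
    (hw : 0 ≤ w.im) (hlw : 0 ≤ (l * w).im) :
    |(Complex.exp (-Complex.I * (((Real.pi - l.arg) / 2 : ℝ) : ℂ)) * w).arg| ≤
      (Real.pi - l.arg) / 2 := by
  have hl := neg_pi_lt_arg l
  rcases eq_or_ne w 0 with rfl | hw0
  · simp only [mul_zero, arg_zero, abs_zero]
    linarith [pi_pos]
  have hw_lo := arg_nonneg_iff.2 hw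
  have hw_hi := arg_le_pi_sub_arg_of_im_nonneg (by linarith [pi_pos]) hw hlw
  rw [arg_exp_neg_mul_I_mul hw0 ⟨by linarith, by linarith⟩, abs_le]
  constructor <;> linarith

/-- If `0 < arg λ < π/2`, `Im w ≥ 0` and `Im (λ w) ≥ 0`, then
`|arg (e^{-i(π - arg λ)/2} w)| ≤ (π - arg λ)/2`. -/
theorem stmt_11 (l w : ℂ) (h1 : 0 < l.arg) (h2 : l.arg < Real.pi / 2)
    (hw : 0 ≤ w.im) (hlw : 0 ≤ (l * w).im) :
    |(Complex.exp (-Complex.I * (((Real.pi - l.arg) / 2 : ℝ) : ℂ)) * w).arg| ≤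
      (Real.pi - l.arg) / 2 :=
  stmt_11_general l w h2 hw hlw
end

section
/- Let H be a Hilbert space and L : (a,b) → B(H) a function whose values are bounded nonnegative selfadjoint operators, nondecreasing in x (in the form order), such that L(x) converges strongly as x ↑ b to a bounded operator L(b). Then for every h in the closure of ran L(a), lim_{x↓a} ‖L(x)^{-1/2} L(a)^{1/2} h‖² = ‖h‖², where L(x)^{-1/2} denotes the Moore–Penrose pseudoinverse of L(x)^{1/2} and the limit L(a) = s-lim_{x↓a} L(x) exists, assuming ran L(a)^{1/2} ⊆ ran L(x)^{1/2} for all x. -/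
/-!
Write `S = L(a)^{1/2}`, `T = L(x)^{1/2}` and `w = L(x)^{-1/2} S h`, so that `T w = S h`.
Passing to the limit in the monotone forms gives `L(a) ≤ L(x)`, i.e. `‖S u‖ ≤ ‖T u‖`.
Hence `|⟪w, T u⟫| = |⟪h, S u⟫| ≤ ‖h‖ ‖T u‖`, and since `w ⟂ ker T` lies in the closure of
`ran T`, this gives `‖w‖ ≤ ‖h‖`. Conversely, as `h` lies in the closure of `ran S`, for
every `c < ‖h‖` some `u` has `c ‖S u‖ < |⟪h, S u⟫| ≤ ‖w‖ ‖T u‖`; strong convergence gives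
`‖T u‖ → ‖S u‖` as `x ↓ a`, so eventually `c < ‖w‖`.
-/

open scoped ComplexOrder ComplexInnerProductSpace

open Filter Topology Set

theorem MonotoneOn.le_of_tendsto_nhdsWithin_Ioo {α β : Type*} [LinearOrder α]
    [TopologicalSpace α] [OrderTopology α] [DenselyOrdered α] [Preorder β] [TopologicalSpace β]
    [OrderClosedTopology β] {f : α → β} {a b x : α} {l : β} (hf : MonotoneOn f (Ioo a b))
    (hl : Tendsto f (𝓝[Ioo a b] a) (𝓝 l)) (hx : x ∈ Ioo a b) : l ≤ f x := by
  have := left_nhdsWithin_Ioo_neBot (hx.1.trans hx.2)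
  refine le_of_tendsto hl ?_
  filter_upwards [inter_mem_nhdsWithin (Ioo a b) (Iio_mem_nhds hx.1)] with y hy
  exact hf hy.1 hx hy.2.le

section InnerProductSpace

open scoped InnerProductSpace

variable {𝕜 E : Type*} [RCLike 𝕜] [NormedAddCommGroup E] [InnerProductSpace 𝕜 E]

theorem norm_le_of_mem_closure_of_norm_inner_le {K : Set E} {w : E} {C : ℝ} (hC : 0 ≤ C)
    (hw : w ∈ closure K) (hK : ∀ y ∈ K, ‖⟪w, y⟫_𝕜‖ ≤ C * ‖y‖) : ‖w‖ ≤ C := by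
  have hclosed : IsClosed {y : E | ‖⟪w, y⟫_𝕜‖ ≤ C * ‖y‖} :=
    isClosed_le (continuous_const.inner continuous_id).norm (continuous_const.mul continuous_norm)
  have hww : ‖⟪w, w⟫_𝕜‖ ≤ C * ‖w‖ := closure_minimal hK hclosed hw
  rw [inner_self_eq_norm_sq_to_K, norm_pow, RCLike.norm_ofReal, abs_norm] at hww
  rcases (norm_nonneg w).eq_or_lt with hw0 | hw0
  · exact hw0 ▸ hC
  · nlinarith

theorem exists_mem_mul_norm_lt_norm_inner {K : Set E} {h : E} (hh : h ∈ closure K) {c : ℝ}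
    (hc0 : 0 ≤ c) (hc : c < ‖h‖) : ∃ y ∈ K, c * ‖y‖ < ‖⟪h, y⟫_𝕜‖ := by
  have hopen : IsOpen {y : E | c * ‖y‖ < ‖⟪h, y⟫_𝕜‖} :=
    isOpen_lt (continuous_const.mul continuous_norm) (continuous_const.inner continuous_id).norm
  have hmem : c * ‖h‖ < ‖⟪h, h⟫_𝕜‖ := by
    rw [inner_self_eq_norm_sq_to_K]
    simp only [norm_pow, RCLike.norm_ofReal, abs_norm]
    nlinarith
  obtain ⟨y, hy, hyK⟩ := mem_closure_iff.1 hh _ hopen hmem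
  exact ⟨y, hyK, hy⟩

variable [CompleteSpace E]

theorem IsSelfAdjoint.norm_apply_eq_sqrt_re_inner {T L : E →L[𝕜] E} (hT : IsSelfAdjoint T)
    (hTL : T ∘L T = L) (u : E) : ‖T u‖ = √(RCLike.re ⟪L u, u⟫_𝕜) := by
  rw [T.apply_norm_eq_sqrt_inner_adjoint_left, hT.adjoint_eq, hTL]

theorem IsSelfAdjoint.mem_closure_range_of_forall_ker_inner_eq_zero {T : E →L[𝕜] E}
    (hT : IsSelfAdjoint T) {w : E} (hw : ∀ u, T u = 0 → ⟪w, u⟫_𝕜 = 0) :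
    w ∈ closure (range T) := by
  have hw' : w ∈ (LinearMap.range (T : E →ₗ[𝕜] E))ᗮᗮ := by
    rw [hT.isSymmetric.orthogonal_range, Submodule.mem_orthogonal']
    exact hw
  rw [Submodule.orthogonal_orthogonal_eq_closure, ← SetLike.mem_coe,
    Submodule.topologicalClosure_coe, LinearMap.coe_range, ContinuousLinearMap.coe_coe] at hw'
  exact hw'

theorem IsSelfAdjoint.inner_apply_eq_of_apply_eq {S T : E →L[𝕜] E} (hS : IsSelfAdjoint S)
    (hT : IsSelfAdjoint T) {h w : E} (hw : T w = S h) (u : E) :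
    ⟪w, T u⟫_𝕜 = ⟪h, S u⟫_𝕜 := by
  rw [← hT.adjoint_eq, ContinuousLinearMap.adjoint_inner_right, hw,
    ← ContinuousLinearMap.adjoint_inner_right, hS.adjoint_eq]

theorem norm_le_of_apply_eq_of_inner_ker_eq_zero {S T : E →L[𝕜] E} (hS : IsSelfAdjoint S)
    (hT : IsSelfAdjoint T) (hST : ∀ u, ‖S u‖ ≤ ‖T u‖) {h w : E} (hw : T w = S h)
    (hker : ∀ u, T u = 0 → ⟪w, u⟫_𝕜 = 0) : ‖w‖ ≤ ‖h‖ := by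
  refine norm_le_of_mem_closure_of_norm_inner_le (𝕜 := 𝕜) (norm_nonneg h)
    (hT.mem_closure_range_of_forall_ker_inner_eq_zero hker) ?_
  rintro _ ⟨u, rfl⟩
  calc ‖⟪w, T u⟫_𝕜‖ = ‖⟪h, S u⟫_𝕜‖ := by rw [hS.inner_apply_eq_of_apply_eq hT hw]
    _ ≤ ‖h‖ * ‖S u‖ := norm_inner_le_norm _ _
    _ ≤ ‖h‖ * ‖T u‖ := by gcongr; exact hST u

theorem tendsto_norm_of_apply_eq {ι : Type*} {l : Filter ι} {S : E →L[𝕜] E}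
    {T : ι → E →L[𝕜] E} {h : E} {w : ι → E} (hS : IsSelfAdjoint S)
    (hT : ∀ᶠ i in l, IsSelfAdjoint (T i)) (hST : ∀ᶠ i in l, ∀ u, ‖S u‖ ≤ ‖T i u‖)
    (hlim : ∀ u, Tendsto (fun i => ‖T i u‖) l (𝓝 ‖S u‖))
    (hw : ∀ᶠ i in l, T i (w i) = S h ∧ ∀ u, T i u = 0 → ⟪w i, u⟫_𝕜 = 0)
    (hh : h ∈ closure (range S)) :
    Tendsto (fun i => ‖w i‖) l (𝓝 ‖h‖) := by
  refine tendsto_order.2 ⟨fun c hc => ?_, fun c hc => ?_⟩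
  · rcases lt_or_ge c 0 with hc0 | hc0
    · exact .of_forall fun i => hc0.trans_le (norm_nonneg _)
    obtain ⟨_, ⟨u, rfl⟩, hu⟩ := exists_mem_mul_norm_lt_norm_inner (𝕜 := 𝕜) hh hc0 hc
    filter_upwards [((hlim u).const_mul c).eventually_lt_const hu, hT, hw] with i hi hTi hwi
    have : c * ‖T i u‖ < ‖w i‖ * ‖T i u‖ := by
      refine hi.trans_le ?_
      rw [← hS.inner_apply_eq_of_apply_eq hTi hwi.1]
      exact norm_inner_le_norm _ _
    exact lt_of_mul_lt_mul_right this (norm_nonneg _)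
  · filter_upwards [hT, hST, hw] with i hTi hSTi hwi
    exact (norm_le_of_apply_eq_of_inner_ker_eq_zero hS hTi hSTi hwi.1 hwi.2).trans_lt hc

end InnerProductSpace

/-- `sq x`, `sqA` are the square roots of `L x`, `La`, and `v x` encodes the Moore–Penrose value
`L(x)^{-1/2} L(a)^{1/2} h` through `sq x (v x) = sqA h` and `v x ⟂ ker (sq x)`. -/
theorem stmt_14_general {H : Type*} [NormedAddCommGroup H] [InnerProductSpace ℂ H] [CompleteSpace H]
    (a b : ℝ) (L : ℝ → (H →L[ℂ] H)) (La : H →L[ℂ] H)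
    (hmono : ∀ x ∈ Set.Ioo a b, ∀ y ∈ Set.Ioo a b, x ≤ y →
      ∀ f : H, (⟪L x f, f⟫).re ≤ (⟪L y f, f⟫).re)
    (hLa : ∀ f : H, Filter.Tendsto (fun x => L x f) (nhdsWithin a (Set.Ioo a b)) (nhds (La f)))
    (sq : ℝ → (H →L[ℂ] H)) (sqA : H →L[ℂ] H)
    (hsq : ∀ x ∈ Set.Ioo a b,
      IsSelfAdjoint (sq x) ∧ (∀ f : H, 0 ≤ ⟪sq x f, f⟫) ∧ sq x ∘L sq x = L x)
    (hsqA : IsSelfAdjoint sqA ∧ (∀ f : H, 0 ≤ ⟪sqA f, f⟫) ∧ sqA ∘L sqA = La)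
    (h : H) (hh : h ∈ closure (Set.range ((La : H →L[ℂ] H) : H → H)))
    (v : ℝ → H)
    (hv : ∀ x ∈ Set.Ioo a b,
      sq x (v x) = sqA h ∧ ∀ u : H, sq x u = 0 → ⟪v x, u⟫ = 0) :
    Filter.Tendsto (fun x => ‖v x‖ ^ 2) (nhdsWithin a (Set.Ioo a b)) (nhds (‖h‖ ^ 2)) := by
  obtain ⟨hsaA, -, hsqA⟩ := hsqA
  have hIoo : ∀ᶠ x in 𝓝[Ioo a b] a, x ∈ Ioo a b := self_mem_nhdsWithin
  have hform (u : H) : Tendsto (fun x => (⟪L x u, u⟫).re) (𝓝[Ioo a b] a) (𝓝 (⟪La u, u⟫).re) :=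
    (Complex.continuous_re.tendsto _).comp ((hLa u).inner tendsto_const_nhds)
  have hnorm (u : H) : ∀ᶠ x in 𝓝[Ioo a b] a, √(⟪L x u, u⟫).re = ‖sq x u‖ := by
    filter_upwards [hIoo] with x hx
    simp [(hsq x hx).1.norm_apply_eq_sqrt_re_inner (hsq x hx).2.2]
  have hle (x : ℝ) (hx : x ∈ Ioo a b) (u : H) : ‖sqA u‖ ≤ ‖sq x u‖ := by
    simp only [hsaA.norm_apply_eq_sqrt_re_inner hsqA, (hsq x hx).1.norm_apply_eq_sqrt_re_inner
      (hsq x hx).2.2, RCLike.re_to_complex]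
    exact Real.sqrt_le_sqrt <| MonotoneOn.le_of_tendsto_nhdsWithin_Ioo
      (f := fun y => (⟪L y u, u⟫).re) (fun y hy z hz hyz => hmono y hy z hz hyz u) (hform u) hx
  refine (tendsto_norm_of_apply_eq (𝕜 := ℂ) (T := sq) hsaA ?_ ?_ ?_ ?_ ?_).pow 2
  · filter_upwards [hIoo] with x hx using (hsq x hx).1
  · filter_upwards [hIoo] with x hx using hle x hx
  · intro u
    rw [hsaA.norm_apply_eq_sqrt_re_inner hsqA, RCLike.re_to_complex]
    exact (hform u).sqrt.congr' (hnorm u)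
  · filter_upwards [hIoo] with x hx using hv x hx
  · exact closure_mono (hsqA ▸ range_comp_subset_range (sqA : H → H) sqA) hh

/-- Key step of Lemma 6.1: for a nondecreasing family `L(x)` of bounded nonnegative
selfadjoint operators on `(a,b)` with strong limits `L(a)`, `L(b)` at the endpoints and
`ran L(a)^{1/2} ⊆ ran L(x)^{1/2}`, one has
`lim_{x↓a} ‖L(x)^{-1/2} L(a)^{1/2} h‖² = ‖h‖²` for every `h` in the closure of `ran L(a)`.
The square roots are encoded by `sq x` (resp. `sqA`), and the value of the Moore–Penrose
pseudoinverse `L(x)^{-1/2} (L(a)^{1/2} h)` is encoded by `v x`: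
`sq x (v x) = sqA h` and `v x ⟂ ker (sq x)`. -/
theorem stmt_14 {H : Type*} [NormedAddCommGroup H] [InnerProductSpace ℂ H] [CompleteSpace H]
    (a b : ℝ) (hab : a < b) (L : ℝ → (H →L[ℂ] H)) (La Lb : H →L[ℂ] H)
    (hsa : ∀ x ∈ Set.Ioo a b, IsSelfAdjoint (L x))
    (hpos : ∀ x ∈ Set.Ioo a b, ∀ f : H, 0 ≤ ⟪L x f, f⟫)
    (hmono : ∀ x ∈ Set.Ioo a b, ∀ y ∈ Set.Ioo a b, x ≤ y →
      ∀ f : H, (⟪L x f, f⟫).re ≤ (⟪L y f, f⟫).re)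
    (hLb : ∀ f : H, Filter.Tendsto (fun x => L x f) (nhdsWithin b (Set.Ioo a b)) (nhds (Lb f)))
    (hLa : ∀ f : H, Filter.Tendsto (fun x => L x f) (nhdsWithin a (Set.Ioo a b)) (nhds (La f)))
    (sq : ℝ → (H →L[ℂ] H)) (sqA : H →L[ℂ] H)
    (hsq : ∀ x ∈ Set.Ioo a b,
      IsSelfAdjoint (sq x) ∧ (∀ f : H, 0 ≤ ⟪sq x f, f⟫) ∧ sq x ∘L sq x = L x)
    (hsqA : IsSelfAdjoint sqA ∧ (∀ f : H, 0 ≤ ⟪sqA f, f⟫) ∧ sqA ∘L sqA = La)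
    (hran : ∀ x ∈ Set.Ioo a b, Set.range (sqA : H → H) ⊆ Set.range ((sq x : H →L[ℂ] H) : H → H))
    (h : H) (hh : h ∈ closure (Set.range ((La : H →L[ℂ] H) : H → H)))
    (v : ℝ → H)
    (hv : ∀ x ∈ Set.Ioo a b,
      sq x (v x) = sqA h ∧ ∀ u : H, sq x u = 0 → ⟪v x, u⟫ = 0) :
    Filter.Tendsto (fun x => ‖v x‖ ^ 2) (nhdsWithin a (Set.Ioo a b)) (nhds (‖h‖ ^ 2)) :=
  stmt_14_general a b L La hmono hLa sq sqA hsq hsqA h hh v hv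
end

section
/- Let B be a nonnegative selfadjoint bounded operator on a Hilbert space H. Then for every g ∈ H, the limit lim_{y↑0} ⟪(B - yI)⁻¹ g, g⟫ equals ‖B^{[-1/2]} g‖² if g ∈ ran B^{1/2}, and equals +∞ (the supremum over y<0 is infinite) if g ∉ ran B^{1/2}. -/
open scoped ComplexOrder ComplexInnerProductSpace

/-!
Write `B = S ^ 2` with `S` selfadjoint and `f = R_y g`, so that `re ⟪R_y g, g⟫ = ‖S f‖² - y ‖f‖²`.

If `g = S v` with `v ⊥ ker S`, then `⟪R_y g, g⟫ = ‖v‖² + ⟪y R_y v, v⟫`, and `y R_y → 0` strongly on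
`closure (ran B) = (ker S)ᗮ`: the family is bounded by `1`, and `y R_y (B w) = y w + y² R_y w`.

If instead `re ⟪R_y g, g⟫ ≤ C` for `y` arbitrarily close to `0`, then
`|⟪g, h⟫| ≤ √C ‖S h‖ + √(-y C) ‖h‖`, hence `|⟪g, h⟫| ≤ √C ‖S h‖`. So `S h ↦ ⟪g, h⟫` is a bounded
functional on `ran S`; by Hahn–Banach and Riesz it is `⟪w, ·⟫`, and then `g = S w`.
-/

open Filter Topology RCLike
open scoped InnerProductSpace

theorem tendsto_apply_zero_of_mem_closure {𝕜 E F ι : Type*} [NontriviallyNormedField 𝕜]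
    [NormedAddCommGroup E] [NormedSpace 𝕜 E] [NormedAddCommGroup F] [NormedSpace 𝕜 F]
    {l : Filter ι} {T : ι → E →L[𝕜] F} {C : ℝ} (hT : ∀ᶠ i in l, ‖T i‖ ≤ C) {s : Set E}
    (hs : ∀ x ∈ s, Tendsto (fun i ↦ T i x) l (𝓝 0)) {v : E} (hv : v ∈ closure s) :
    Tendsto (fun i ↦ T i v) l (𝓝 0) := by
  rw [Metric.tendsto_nhds]
  intro ε hε
  set K := max C 0 + 1
  have hK : 0 < K := by positivity
  obtain ⟨x, hxs, hvx⟩ := Metric.mem_closure_iff.mp hv (ε / 2 / K) (by positivity)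
  filter_upwards [hT, Metric.tendsto_nhds.mp (hs x hxs) (ε / 2) (half_pos hε)] with i hTi hxi
  rw [dist_zero_right] at hxi ⊢
  rw [dist_eq_norm] at hvx
  calc ‖T i v‖ = ‖T i (v - x) + T i x‖ := by rw [← map_add, sub_add_cancel]
    _ ≤ K * ‖v - x‖ + ‖T i x‖ := by
      refine norm_add_le_of_le ((ContinuousLinearMap.le_opNorm _ _).trans ?_) le_rfl
      gcongr
      exact hTi.trans ((le_max_left _ _).trans (le_add_of_nonneg_right zero_le_one))
    _ < K * (ε / 2 / K) + ε / 2 := by gcongr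
    _ = ε := by field_simp; ring

section InnerProductSpace

variable {𝕜 E F : Type*} [RCLike 𝕜]

theorem mem_range_adjoint_of_norm_inner_le [NormedAddCommGroup E] [InnerProductSpace 𝕜 E]
    [CompleteSpace E] [NormedAddCommGroup F] [InnerProductSpace 𝕜 F] [CompleteSpace F]
    {T : E →L[𝕜] F} {g : E} {C : ℝ} (hg : ∀ x, ‖⟪g, x⟫_𝕜‖ ≤ C * ‖T x‖) :
    g ∈ Set.range (ContinuousLinearMap.adjoint T) := by
  let T' : E →ₗ[𝕜] F := T
  have hker : LinearMap.ker T' ≤ LinearMap.ker (innerₛₗ 𝕜 g) := fun x hx ↦ by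
    simpa [show T x = 0 from hx] using hg x
  let φ : LinearMap.range T' →ₗ[𝕜] 𝕜 :=
    (LinearMap.ker T').liftQ (innerₛₗ 𝕜 g) hker ∘ₗ T'.quotKerEquivRange.symm
  have hφ : ∀ x, φ ⟨T' x, LinearMap.mem_range_self T' x⟩ = ⟪g, x⟫_𝕜 := fun x ↦ by
    simp only [φ, LinearMap.comp_apply, LinearEquiv.coe_coe,
      LinearMap.quotKerEquivRange_symm_apply_image]
    rfl
  have hφC : ∀ z, ‖φ z‖ ≤ C * ‖z‖ := by
    rintro ⟨_, x, rfl⟩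
    rw [hφ]
    exact hg x
  obtain ⟨G, hG, -⟩ := exists_extension_norm_eq _ (φ.mkContinuous C hφC)
  refine ⟨(InnerProductSpace.toDual 𝕜 F).symm G, ext_inner_right 𝕜 fun x ↦ ?_⟩
  rw [ContinuousLinearMap.adjoint_inner_left, InnerProductSpace.toDual_symm_apply]
  exact (hG ⟨T x, LinearMap.mem_range_self T' x⟩).trans (hφ x)

section Resolvent

variable [NormedAddCommGroup E] [InnerProductSpace 𝕜 E] {S R : E →L[𝕜] E} {y : ℝ}

theorem re_inner_mul_self_sub_smul_apply_self (hS : (S : E →ₗ[𝕜] E).IsSymmetric) (f : E) :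
    re ⟪(S * S - (y : 𝕜) • 1) f, f⟫_𝕜 = ‖S f‖ ^ 2 - y * ‖f‖ ^ 2 := by
  have hS' : ∀ x z, ⟪S x, z⟫_𝕜 = ⟪x, S z⟫_𝕜 := hS
  simp [inner_sub_left, inner_smul_left, hS']

theorem re_inner_resolvent_apply_self (hS : (S : E →ₗ[𝕜] E).IsSymmetric)
    (hAR : (S * S - (y : 𝕜) • 1) * R = 1) (g : E) :
    re ⟪R g, g⟫_𝕜 = ‖S (R g)‖ ^ 2 - y * ‖R g‖ ^ 2 := by
  have hg : (S * S - (y : 𝕜) • 1) (R g) = g := by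
    rw [← mul_apply_eq_comp, hAR, one_apply_eq_self]
  rw [← re_inner_mul_self_sub_smul_apply_self hS, hg, inner_re_symm]

theorem neg_mul_norm_resolvent_apply_le (hS : (S : E →ₗ[𝕜] E).IsSymmetric)
    (hAR : (S * S - (y : 𝕜) • 1) * R = 1) (u : E) : -y * ‖R u‖ ≤ ‖u‖ := by
  have h : -y * ‖R u‖ ^ 2 ≤ ‖R u‖ * ‖u‖ := calc
    -y * ‖R u‖ ^ 2 ≤ re ⟪R u, u⟫_𝕜 := by
      rw [re_inner_resolvent_apply_self hS hAR]; nlinarith [sq_nonneg ‖S (R u)‖]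
    _ ≤ ‖R u‖ * ‖u‖ := (re_le_norm _).trans (norm_inner_le_norm _ _)
  rcases (norm_nonneg (R u)).eq_or_lt with h0 | h0
  · rw [← h0, mul_zero]; positivity
  · nlinarith

theorem norm_smul_resolvent_le (hS : (S : E →ₗ[𝕜] E).IsSymmetric)
    (hAR : (S * S - (y : 𝕜) • 1) * R = 1) (hy : y ≤ 0) : ‖(y : 𝕜) • R‖ ≤ 1 :=
  ContinuousLinearMap.opNorm_le_bound _ zero_le_one fun u ↦ by
    rw [smul_apply, norm_smul, norm_ofReal, abs_of_nonpos hy, one_mul]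
    exact neg_mul_norm_resolvent_apply_le hS hAR u

theorem resolvent_apply_sq_apply (hRA : R * (S * S - (y : 𝕜) • 1) = 1) (w : E) :
    R (S (S w)) = w + (y : 𝕜) • R w := by
  have h := congr($hRA w)
  simp only [mul_apply_eq_comp, sub_apply,
    smul_apply, one_apply_eq_self, map_sub, map_smul] at h
  exact eq_add_of_sub_eq h

theorem commute_resolvent (hAR : (S * S - (y : 𝕜) • 1) * R = 1)
    (hRA : R * (S * S - (y : 𝕜) • 1) = 1) : Commute S R :=
  Commute.units_inv_right (u := ⟨_, R, hAR, hRA⟩)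
    (((Commute.refl S).mul_right (Commute.refl S)).sub_right ((Commute.one_right S).smul_right _))

theorem re_inner_resolvent_apply_apply (hS : (S : E →ₗ[𝕜] E).IsSymmetric)
    (hAR : (S * S - (y : 𝕜) • 1) * R = 1) (hRA : R * (S * S - (y : 𝕜) • 1) = 1) (v : E) :
    re ⟪R (S v), S v⟫_𝕜 = ‖v‖ ^ 2 + re ⟪(y : 𝕜) • R v, v⟫_𝕜 := by
  have hS' : ∀ x z, ⟪x, S z⟫_𝕜 = ⟪S x, z⟫_𝕜 := fun x z ↦ (hS x z).symm
  rw [hS', ← mul_apply_eq_comp S R, (commute_resolvent hAR hRA).eq,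
    mul_apply_eq_comp, resolvent_apply_sq_apply hRA, inner_add_left, map_add,
    inner_self_eq_norm_sq]

theorem norm_inner_le_of_resolvent (hS : (S : E →ₗ[𝕜] E).IsSymmetric)
    (hAR : (S * S - (y : 𝕜) • 1) * R = 1) (hy : y ≤ 0) (g h : E) :
    ‖⟪g, h⟫_𝕜‖ ≤ √(re ⟪R g, g⟫_𝕜) * ‖S h‖ + √(-y * re ⟪R g, g⟫_𝕜) * ‖h‖ := by
  have hq := re_inner_resolvent_apply_self hS hAR g
  have hg : S (S (R g)) - (y : 𝕜) • R g = g := by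
    simpa [sub_apply] using congr($hAR g)
  set f := R g
  have hyf : 0 ≤ -y * ‖f‖ ^ 2 := mul_nonneg (neg_nonneg.2 hy) (sq_nonneg _)
  have hSf : ‖S f‖ ≤ √(re ⟪f, g⟫_𝕜) := Real.le_sqrt_of_sq_le (by linarith)
  have hf : -y * ‖f‖ ≤ √(-y * re ⟪f, g⟫_𝕜) := by
    refine Real.le_sqrt_of_sq_le ?_
    nlinarith [sq_nonneg ‖S f‖]
  calc ‖⟪g, h⟫_𝕜‖ = ‖⟪S f, S h⟫_𝕜 - (y : 𝕜) * ⟪f, h⟫_𝕜‖ := by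
        rw [← hg, inner_sub_left, inner_smul_left, conj_ofReal]
        exact congr(‖$(hS _ _) - _‖)
    _ ≤ ‖S f‖ * ‖S h‖ + -y * ‖f‖ * ‖h‖ := by
        refine (norm_sub_le _ _).trans (add_le_add (norm_inner_le_norm _ _) ?_)
        rw [norm_mul, norm_ofReal, abs_of_nonpos hy, mul_assoc]
        exact mul_le_mul_of_nonneg_left (norm_inner_le_norm _ _) (neg_nonneg.2 hy)
    _ ≤ _ := by gcongr

end Resolvent

section ResolventFamily

variable [NormedAddCommGroup E] [InnerProductSpace 𝕜 E] {S : E →L[𝕜] E} {R : ℝ → E →L[𝕜] E}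
  (hR : ∀ y : ℝ, y < 0 → (S * S - (y : 𝕜) • 1) * R y = 1 ∧ R y * (S * S - (y : 𝕜) • 1) = 1)
include hR

theorem tendsto_smul_resolvent_apply_nhds_zero (hS : (S : E →ₗ[𝕜] E).IsSymmetric)
    {v : E} (hv : v ∈ closure (Set.range (S * S))) :
    Tendsto (fun y : ℝ ↦ (y : 𝕜) • R y v) (𝓝[<] 0) (𝓝 0) := by
  refine tendsto_apply_zero_of_mem_closure (T := fun y : ℝ ↦ (y : 𝕜) • R y) (C := 1) ?_ ?_ hv
  · filter_upwards [self_mem_nhdsWithin] with y hy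
    exact norm_smul_resolvent_le hS (hR y hy).1 (le_of_lt hy)
  rintro _ ⟨w, rfl⟩
  refine squeeze_zero_norm' (a := fun y : ℝ ↦ 2 * |y| * ‖w‖) ?_ ?_
  · filter_upwards [self_mem_nhdsWithin] with y (hy : y < 0)
    have hRw : ‖(y : 𝕜) • R y w‖ ≤ ‖w‖ := by
      rw [norm_smul, norm_ofReal, abs_of_neg hy]
      exact neg_mul_norm_resolvent_apply_le hS (hR y hy).1 w
    calc ‖(y : 𝕜) • R y (S (S w))‖ = ‖(y : 𝕜) • w + (y : 𝕜) • ((y : 𝕜) • R y w)‖ := by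
          rw [resolvent_apply_sq_apply (hR y hy).2, smul_add]
      _ ≤ |y| * ‖w‖ + |y| * ‖w‖ := by
          refine norm_add_le_of_le ?_ ?_ <;> rw [norm_smul, norm_ofReal]
          gcongr
      _ = 2 * |y| * ‖w‖ := by ring
  · have h : Continuous fun y : ℝ ↦ 2 * |y| * ‖w‖ := by fun_prop
    simpa using (h.tendsto 0).mono_left nhdsWithin_le_nhds

theorem tendsto_re_inner_resolvent_apply_apply [CompleteSpace E] (hS : IsSelfAdjoint S) {v : E}
    (hv : v ∈ (LinearMap.ker (S : E →ₗ[𝕜] E))ᗮ) :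
    Tendsto (fun y ↦ re ⟪R y (S v), S v⟫_𝕜) (𝓝[<] 0) (𝓝 (‖v‖ ^ 2)) := by
  have hv' : v ∈ closure (Set.range (S * S)) := by
    have hSS : (S ∘L S).adjoint = S ∘L S := by rw [ContinuousLinearMap.adjoint_comp, hS.adjoint_eq]
    have hker := S.ker_adjoint_comp_self
    rw [hS.adjoint_eq] at hker
    rwa [← hker, (S ∘L S).orthogonal_ker, hSS, ← SetLike.mem_coe,
      Submodule.topologicalClosure_coe, LinearMap.coe_range] at hv
  have hre : Continuous fun x : E ↦ re ⟪x, v⟫_𝕜 := by fun_prop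
  have hlim := (hre.tendsto 0).comp (tendsto_smul_resolvent_apply_nhds_zero hR hS.isSymmetric hv')
  rw [inner_zero_left, map_zero] at hlim
  refine (by simpa using tendsto_const_nhds.add hlim : Tendsto _ _ (𝓝 (‖v‖ ^ 2))).congr' ?_
  filter_upwards [self_mem_nhdsWithin] with y hy
  exact (re_inner_resolvent_apply_apply hS.isSymmetric (hR y hy).1 (hR y hy).2 v).symm

theorem tendsto_re_inner_resolvent_atTop [CompleteSpace E] (hS : IsSelfAdjoint S) {g : E}
    (hg : g ∉ Set.range S) :
    Tendsto (fun y ↦ re ⟪R y g, g⟫_𝕜) (𝓝[<] 0) atTop := by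
  contrapose! hg
  rw [tendsto_atTop] at hg
  push Not at hg
  obtain ⟨C, hC⟩ := hg
  rw [← hS.adjoint_eq]
  refine mem_range_adjoint_of_norm_inner_le (C := √C) fun h ↦ ?_
  have hlim : Tendsto (fun y : ℝ ↦ √C * ‖S h‖ + √(-y * C) * ‖h‖) (𝓝[<] 0) (𝓝 (√C * ‖S h‖)) := by
    have hc : Continuous fun y : ℝ ↦ √C * ‖S h‖ + √(-y * C) * ‖h‖ := by fun_prop
    simpa using (hc.tendsto 0).mono_left nhdsWithin_le_nhds
  refine ge_of_tendsto_of_frequently hlim ((hC.and_eventually self_mem_nhdsWithin).mono ?_)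
  rintro y ⟨hq, hy : y < 0⟩
  refine (norm_inner_le_of_resolvent hS.isSymmetric (hR y hy).1 hy.le g h).trans ?_
  gcongr
  linarith

end ResolventFamily

end InnerProductSpace

theorem stmt_16_general {H : Type*} [NormedAddCommGroup H] [InnerProductSpace ℂ H] [CompleteSpace H]
    (B : H →L[ℂ] H) (sqB : H →L[ℂ] H)
    (hsq : IsSelfAdjoint sqB ∧ (∀ f : H, 0 ≤ ⟪sqB f, f⟫) ∧ sqB ∘L sqB = B)
    (R : ℝ → (H →L[ℂ] H))
    (hR : ∀ y : ℝ, y < 0 →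
      (B - (y : ℂ) • 1) ∘L R y = 1 ∧ R y ∘L (B - (y : ℂ) • 1) = 1)
    (g : H) :
    (∀ v : H, sqB v = g → (∀ u : H, sqB u = 0 → ⟪v, u⟫ = 0) →
      Filter.Tendsto (fun y => (⟪R y g, g⟫).re) (nhdsWithin 0 (Set.Iio (0 : ℝ)))
        (nhds (‖v‖ ^ 2))) ∧
    (g ∉ Set.range (sqB : H → H) →
      Filter.Tendsto (fun y => (⟪R y g, g⟫).re) (nhdsWithin 0 (Set.Iio (0 : ℝ)))
        Filter.atTop) := by
  obtain ⟨hS, -, rfl⟩ := hsq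
  refine ⟨?_, tendsto_re_inner_resolvent_atTop hR hS⟩
  rintro v rfl hv
  exact tendsto_re_inner_resolvent_apply_apply hR hS ((Submodule.mem_orthogonal' _ _).2 hv)

/-- For a bounded nonnegative selfadjoint `B` (square root `sqB`) and `g ∈ H`, the limit
`lim_{y↑0} ⟪(B - y)⁻¹ g, g⟫` equals `‖B^{[-1/2]} g‖²` if `g ∈ ran B^{1/2}` (the
pseudoinverse value being encoded by `v`), and the quantity tends to `+∞` if
`g ∉ ran B^{1/2}`. -/
theorem stmt_16 {H : Type*} [NormedAddCommGroup H] [InnerProductSpace ℂ H] [CompleteSpace H]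
    (B : H →L[ℂ] H) (hsa : IsSelfAdjoint B) (hnn : ∀ f : H, 0 ≤ ⟪B f, f⟫)
    (sqB : H →L[ℂ] H)
    (hsq : IsSelfAdjoint sqB ∧ (∀ f : H, 0 ≤ ⟪sqB f, f⟫) ∧ sqB ∘L sqB = B)
    (R : ℝ → (H →L[ℂ] H))
    (hR : ∀ y : ℝ, y < 0 →
      (B - (y : ℂ) • 1) ∘L R y = 1 ∧ R y ∘L (B - (y : ℂ) • 1) = 1)
    (g : H) :
    (∀ v : H, sqB v = g → (∀ u : H, sqB u = 0 → ⟪v, u⟫ = 0) →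
      Filter.Tendsto (fun y => (⟪R y g, g⟫).re) (nhdsWithin 0 (Set.Iio (0 : ℝ)))
        (nhds (‖v‖ ^ 2))) ∧
    (g ∉ Set.range (sqB : H → H) →
      Filter.Tendsto (fun y => (⟪R y g, g⟫).re) (nhdsWithin 0 (Set.Iio (0 : ℝ)))
        Filter.atTop) :=
  stmt_16_general B sqB hsq R hR g
end

section
/- Let D be a selfadjoint contraction on M, N : D_D-range-closure → K a contraction, X a selfadjoint contraction on the closure of ran D_{N*} (extended by 0), and define C = D_D N*, F = -N D N* + D_{N*} X D_{N*}, where D_D = (I - D²)^{1/2} and D_{N*} = (I - NN*)^{1/2}. Then the block operator T = [[D, C],[C*, F]] on M ⊕ K is a selfadjoint contraction, and F' := F + N(I+D)N* and F'' := F - N(I-D)N* are selfadjoint contractions on K with F' - F'' = 2NN*. -/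
/-!
Let `J = [[D, D_D], [D_D, -D]]` on `M ⊕ M` (the Julia operator of `D`). Since `D_D` is the
square root of `1 - D²`, it commutes with `D`, so `J² = 1` and `J` is a selfadjoint unitary.
The map `W k = (N* k, D_{N*} k)` is an isometry because `N N* + D_{N*}² = 1`, hence so is
`V (m, k) = ((m, N* k), D_{N*} k)`. Expanding the products shows `T = V* (J ⊕ X) V`,
`F' = W* (1 ⊕ X) W` and `F'' = W* (-1 ⊕ X) W`, and a compression of a selfadjoint
contraction by a contraction is again a selfadjoint contraction.
-/

open scoped ComplexInnerProductSpace InnerProduct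

theorem commute_of_mul_self_eq_one_sub {A : Type*} [CStarAlgebra A] [PartialOrder A]
    [StarOrderedRing A] {a b : A} (hb : 0 ≤ b) (h : b * b = 1 - a * a) : Commute a b := by
  rw [← CFC.sqrt_mul_self b, h, CFC.sqrt_eq_cfc]
  exact (Commute.cfc_nnreal (by simp [Commute, SemiconjBy, sub_mul, mul_sub, mul_assoc]) _).symm

namespace ContinuousLinearMap

variable {𝕜 E F G : Type*} [RCLike 𝕜] [NormedAddCommGroup E] [InnerProductSpace 𝕜 E]
  [NormedAddCommGroup F] [InnerProductSpace 𝕜 F] [NormedAddCommGroup G] [InnerProductSpace 𝕜 G]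

noncomputable def prodL2 (A : E →L[𝕜] F) (B : E →L[𝕜] G) : E →L[𝕜] WithLp 2 (F × G) :=
  (WithLp.prodContinuousLinearEquiv 2 𝕜 F G).symm ∘L A.prod B

section ProdL2

variable (A : E →L[𝕜] F) (B : E →L[𝕜] G)

@[simp] theorem prodL2_apply_fst (x : E) : (prodL2 A B x).fst = A x := rfl

@[simp] theorem prodL2_apply_snd (x : E) : (prodL2 A B x).snd = B x := rfl

theorem norm_sq_prodL2_apply (x : E) : ‖prodL2 A B x‖ ^ 2 = ‖A x‖ ^ 2 + ‖B x‖ ^ 2 :=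
  WithLp.prod_norm_sq_eq_of_L2 _

variable [CompleteSpace E] [CompleteSpace F] [CompleteSpace G]

theorem adjoint_prodL2 :
    (prodL2 A B)† = A† ∘L WithLp.fstL 2 𝕜 F G + B† ∘L WithLp.sndL 2 𝕜 F G := by
  refine ((eq_adjoint_iff _ _).mpr fun y x => ?_).symm
  simp [inner_add_left, adjoint_inner_left]

theorem norm_prodL2_apply_of_adjoint_comp_add_adjoint_comp (h : A† ∘L A + B† ∘L B = 1) (x : E) :
    ‖prodL2 A B x‖ = ‖x‖ := by
  refine (prodL2 A B).norm_map_iff_adjoint_comp_self.mpr ?_ x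
  ext x
  simpa [adjoint_prodL2] using congr($h x)

end ProdL2

noncomputable def fstProdL2 {H : Type*} [NormedAddCommGroup H] [InnerProductSpace 𝕜 H]
    (A : G →L[𝕜] F) (B : G →L[𝕜] H) : WithLp 2 (E × G) →L[𝕜] WithLp 2 (WithLp 2 (E × F) × H) :=
  prodL2 (prodL2 (WithLp.fstL 2 𝕜 E G) (A ∘L WithLp.sndL 2 𝕜 E G)) (B ∘L WithLp.sndL 2 𝕜 E G)

theorem norm_fstProdL2_apply {H : Type*} [NormedAddCommGroup H] [InnerProductSpace 𝕜 H]
    {A : G →L[𝕜] F} {B : G →L[𝕜] H} (h : ∀ y, ‖prodL2 A B y‖ = ‖y‖) (x : WithLp 2 (E × G)) :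
    ‖fstProdL2 (E := E) A B x‖ = ‖x‖ := by
  refine (pow_left_inj₀ (norm_nonneg _) (norm_nonneg _) two_ne_zero).mp ?_
  rw [fstProdL2, norm_sq_prodL2_apply, norm_sq_prodL2_apply, WithLp.prod_norm_sq_eq_of_L2 x,
    ← h x.snd, norm_sq_prodL2_apply]
  simp only [WithLp.fstL_apply, comp_apply, WithLp.sndL_apply]
  ring

noncomputable def blockL2 (P : F →L[𝕜] F) (Q : G →L[𝕜] F) (R : F →L[𝕜] G) (S : G →L[𝕜] G) :
    WithLp 2 (F × G) →L[𝕜] WithLp 2 (F × G) :=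
  prodL2 (P ∘L WithLp.fstL 2 𝕜 F G + Q ∘L WithLp.sndL 2 𝕜 F G)
    (R ∘L WithLp.fstL 2 𝕜 F G + S ∘L WithLp.sndL 2 𝕜 F G)

section BlockL2

variable (P P' : F →L[𝕜] F) (Q Q' : G →L[𝕜] F) (R R' : F →L[𝕜] G) (S S' : G →L[𝕜] G)

@[simp] theorem blockL2_apply_fst (x : WithLp 2 (F × G)) :
    (blockL2 P Q R S x).fst = P x.fst + Q x.snd := rfl

@[simp] theorem blockL2_apply_snd (x : WithLp 2 (F × G)) :
    (blockL2 P Q R S x).snd = R x.fst + S x.snd := rfl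

theorem blockL2_mul_blockL2 :
    blockL2 P Q R S * blockL2 P' Q' R' S' =
      blockL2 (P * P' + Q ∘L R') (P ∘L Q' + Q ∘L S') (R ∘L P' + S ∘L R') (R ∘L Q' + S * S') := by
  refine ContinuousLinearMap.ext fun x => (WithLp.ext_iff _).mpr (Prod.ext ?_ ?_) <;>
  · simp only [mul_apply_eq_comp, comp_apply, add_apply, map_add, WithLp.ofLp_fst,
      WithLp.ofLp_snd, blockL2_apply_fst, blockL2_apply_snd]
    abel

theorem blockL2_one_zero_zero_one : blockL2 (1 : F →L[𝕜] F) 0 0 (1 : G →L[𝕜] G) = 1 :=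
  ContinuousLinearMap.ext fun x => (WithLp.ext_iff _).mpr (Prod.ext (by simp) (by simp))

theorem norm_blockL2_zero_zero_le : ‖blockL2 P 0 0 S‖ ≤ max ‖P‖ ‖S‖ := by
  refine opNorm_le_bound _ (by positivity) fun x => le_of_sq_le_sq ?_ (by positivity)
  rw [mul_pow, blockL2, norm_sq_prodL2_apply, WithLp.prod_norm_sq_eq_of_L2, mul_add]
  simp only [add_apply, coe_comp, Function.comp_apply, WithLp.fstL_apply, WithLp.sndL_apply,
    zero_apply, add_zero, zero_add]
  rw [← mul_pow, ← mul_pow]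
  gcongr
  · exact (P.le_opNorm _).trans (mul_le_mul_of_nonneg_right (le_max_left _ _) (norm_nonneg _))
  · exact (S.le_opNorm _).trans (mul_le_mul_of_nonneg_right (le_max_right _ _) (norm_nonneg _))

variable [CompleteSpace F] [CompleteSpace G]

theorem isSelfAdjoint_blockL2 {P : F →L[𝕜] F} {S : G →L[𝕜] G} (hP : IsSelfAdjoint P)
    (hS : IsSelfAdjoint S) : IsSelfAdjoint (blockL2 P Q (Q†) S) := by
  refine ((eq_adjoint_iff (blockL2 P Q (Q†) S) _).mpr fun x y => ?_).symm
  simp only [WithLp.prod_inner_apply, WithLp.ofLp_fst, WithLp.ofLp_snd, blockL2_apply_fst,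
    blockL2_apply_snd, inner_add_left, inner_add_right, adjoint_inner_left, adjoint_inner_right,
    ← adjoint_inner_left P, ← adjoint_inner_left S, hP.adjoint_eq, hS.adjoint_eq]
  ring

theorem adjoint_prodL2_comp_blockL2_comp_prodL2 [CompleteSpace E] (A : E →L[𝕜] F)
    (B : E →L[𝕜] G) :
    (prodL2 A B)† ∘L blockL2 P 0 0 S ∘L prodL2 A B = A† ∘L P ∘L A + B† ∘L S ∘L B := by
  ext x
  simp [adjoint_prodL2]

end BlockL2

variable [CompleteSpace E] [CompleteSpace F]

theorem norm_adjoint_comp_comp_le (V : E →L[𝕜] F) (S : F →L[𝕜] F) :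
    ‖V† ∘L S ∘L V‖ ≤ ‖V‖ * ‖S‖ * ‖V‖ := by
  calc ‖V† ∘L S ∘L V‖ ≤ ‖V†‖ * (‖S‖ * ‖V‖) :=
        (opNorm_comp_le _ _).trans (mul_le_mul_of_nonneg_left (opNorm_comp_le _ _) (norm_nonneg _))
    _ = ‖V‖ * ‖S‖ * ‖V‖ := by rw [adjoint.norm_map, mul_assoc]

theorem isSelfAdjoint_adjoint_comp_comp_and_norm_le_one {V : E →L[𝕜] F} {S : F →L[𝕜] F}
    (hS : IsSelfAdjoint S) (hSn : ‖S‖ ≤ 1) (hV : ‖V‖ ≤ 1) :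
    IsSelfAdjoint (V† ∘L S ∘L V) ∧ ‖V† ∘L S ∘L V‖ ≤ 1 := by
  refine ⟨hS.adjoint_conj V, (norm_adjoint_comp_comp_le V S).trans ?_⟩
  calc ‖V‖ * ‖S‖ * ‖V‖ ≤ 1 * 1 * 1 := by gcongr
    _ = 1 := by norm_num

theorem isSelfAdjoint_adjoint_comp_blockL2_comp_and_norm_le_one [CompleteSpace G]
    {V : E →L[𝕜] WithLp 2 (F × G)} (hV : ‖V‖ ≤ 1) {P : F →L[𝕜] F} {S : G →L[𝕜] G}
    (hP : IsSelfAdjoint P) (hS : IsSelfAdjoint S) (hPn : ‖P‖ ≤ 1) (hSn : ‖S‖ ≤ 1) :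
    IsSelfAdjoint (V† ∘L blockL2 P 0 0 S ∘L V) ∧ ‖V† ∘L blockL2 P 0 0 S ∘L V‖ ≤ 1 :=
  isSelfAdjoint_adjoint_comp_comp_and_norm_le_one (by simpa using isSelfAdjoint_blockL2 0 hP hS)
    ((norm_blockL2_zero_zero_le P S).trans (max_le hPn hSn)) hV

/-- For `DD = (1 - D²)^{1/2}` this is the Julia operator of the selfadjoint operator `D`. -/
noncomputable def julia (D DD : F →L[𝕜] F) : WithLp 2 (F × F) →L[𝕜] WithLp 2 (F × F) :=
  blockL2 D DD DD (-D)

theorem blockL2_eq_adjoint_fstProdL2_comp_blockL2_julia_comp [CompleteSpace G] {D DD : F →L[𝕜] F}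
    (hDD : IsSelfAdjoint DD) (N : F →L[𝕜] G) {DNs : G →L[𝕜] G} (hDNs : IsSelfAdjoint DNs)
    (X : G →L[𝕜] G) :
    blockL2 D (DD ∘L N†) ((DD ∘L N†)†) (-(N ∘L D ∘L N†) + DNs ∘L X ∘L DNs) =
      (fstProdL2 (N†) DNs)† ∘L blockL2 (julia D DD) 0 0 X ∘L fstProdL2 (N†) DNs := by
  refine ContinuousLinearMap.ext fun x => ext_inner_right 𝕜 fun y => ?_
  rw [comp_apply (_†), adjoint_inner_left]
  simp only [julia, fstProdL2, adjoint_comp, adjoint_adjoint, hDD.adjoint_eq,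
    WithLp.prod_inner_apply, WithLp.ofLp_fst, WithLp.ofLp_snd, blockL2_apply_fst,
    blockL2_apply_snd, prodL2_apply_fst, prodL2_apply_snd, WithLp.fstL_apply, WithLp.sndL_apply,
    comp_apply, add_apply, neg_apply, zero_apply, map_add, map_neg, inner_add_left, inner_neg_left,
    adjoint_inner_right, ← adjoint_inner_left DNs, hDNs.adjoint_eq, add_zero, zero_add]
  ring

section Julia

variable {H : Type*} [NormedAddCommGroup H] [InnerProductSpace ℂ H] [CompleteSpace H]

theorem julia_mul_self {D DD : H →L[ℂ] H} (hDD : 0 ≤ DD) (hsq : DD * DD = 1 - D * D) :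
    julia D DD * julia D DD = 1 := by
  have hcomm := commute_of_mul_self_eq_one_sub hDD hsq
  rw [julia, blockL2_mul_blockL2, ← blockL2_one_zero_zero_one]
  congr 1
  · change D * D + DD * DD = 1
    rw [hsq, add_sub_cancel]
  · change D * DD + DD * -D = 0
    rw [mul_neg, ← sub_eq_add_neg, hcomm.eq, sub_self]
  · change DD * D + -D * DD = 0
    rw [neg_mul, ← sub_eq_add_neg, hcomm.eq, sub_self]
  · change DD * DD + -D * -D = 1
    rw [hsq, neg_mul_neg, sub_add_cancel]

theorem isSelfAdjoint_julia_and_norm_le_one {D DD : H →L[ℂ] H} (hD : IsSelfAdjoint D)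
    (hDD : 0 ≤ DD) (hsq : DD * DD = 1 - D * D) :
    IsSelfAdjoint (julia D DD) ∧ ‖julia D DD‖ ≤ 1 := by
  have hJ : IsSelfAdjoint (julia D DD) := by
    simpa [julia, (IsSelfAdjoint.of_nonneg hDD).adjoint_eq] using isSelfAdjoint_blockL2 DD hD hD.neg
  have hJJ : (julia D DD)† ∘L julia D DD = 1 := by
    rw [hJ.adjoint_eq]
    exact julia_mul_self hDD hsq
  refine ⟨hJ, opNorm_le_bound _ zero_le_one fun x => ?_⟩
  rw [one_mul, (julia D DD).norm_map_iff_adjoint_comp_self.mpr hJJ]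

end Julia

end ContinuousLinearMap

open ContinuousLinearMap in
theorem stmt_18_general {M K : Type*} [NormedAddCommGroup M] [InnerProductSpace ℂ M] [CompleteSpace M]
    [NormedAddCommGroup K] [InnerProductSpace ℂ K] [CompleteSpace K]
    (D : M →L[ℂ] M) (hDsa : IsSelfAdjoint D)
    (DD : M →L[ℂ] M) (hDDsa : IsSelfAdjoint DD) (hDDnn : ∀ f : M, 0 ≤ (⟪DD f, f⟫).re)
    (hDDsq : DD ∘L DD = 1 - D ∘L D)
    (N : M →L[ℂ] K)
    (DNs : K →L[ℂ] K) (hDNssa : IsSelfAdjoint DNs)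
    (hDNssq : DNs ∘L DNs = 1 - N ∘L N.adjoint)
    (X : K →L[ℂ] K) (hXsa : IsSelfAdjoint X) (hXc : ‖X‖ ≤ 1)
    (C : K →L[ℂ] M) (hC : C = DD ∘L N.adjoint)
    (F : K →L[ℂ] K) (hF : F = -(N ∘L D ∘L N.adjoint) + DNs ∘L X ∘L DNs)
    (T : WithLp 2 (M × K) →L[ℂ] WithLp 2 (M × K))
    (hT : T =
      ((WithLp.prodContinuousLinearEquiv 2 ℂ M K).symm : M × K →L[ℂ] WithLp 2 (M × K)) ∘L
        ((((D ∘L ContinuousLinearMap.fst ℂ M K) + (C ∘L ContinuousLinearMap.snd ℂ M K)).prod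
          ((C.adjoint ∘L ContinuousLinearMap.fst ℂ M K) +
            (F ∘L ContinuousLinearMap.snd ℂ M K))) ∘L
          ((WithLp.prodContinuousLinearEquiv 2 ℂ M K) : WithLp 2 (M × K) →L[ℂ] M × K)))
    (F' F'' : K →L[ℂ] K)
    (hF' : F' = F + N ∘L (1 + D) ∘L N.adjoint)
    (hF'' : F'' = F - N ∘L (1 - D) ∘L N.adjoint) :
    IsSelfAdjoint T ∧ ‖T‖ ≤ 1 ∧
    IsSelfAdjoint F' ∧ ‖F'‖ ≤ 1 ∧ IsSelfAdjoint F'' ∧ ‖F''‖ ≤ 1 ∧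
    F' - F'' = (2 : ℂ) • (N ∘L N.adjoint) := by
  have hDD : 0 ≤ DD := (nonneg_iff_isPositive DD).mpr (isPositive_def'.mpr ⟨hDDsa, hDDnn⟩)
  obtain ⟨hJsa, hJn⟩ := isSelfAdjoint_julia_and_norm_le_one hDsa hDD hDDsq
  set W := prodL2 (N†) DNs
  have hW : ∀ k, ‖W k‖ = ‖k‖ := norm_prodL2_apply_of_adjoint_comp_add_adjoint_comp _ _ <| by
    rw [adjoint_adjoint, hDNssa.adjoint_eq, hDNssq, add_sub_cancel]
  have hWn : ‖W‖ ≤ 1 := opNorm_le_bound _ zero_le_one fun k => by rw [one_mul, hW]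
  have hVn : ‖fstProdL2 (E := M) (N†) DNs‖ ≤ 1 :=
    opNorm_le_bound _ zero_le_one fun x => by rw [one_mul, norm_fstProdL2_apply hW]
  have hTV : T = (fstProdL2 (N†) DNs)† ∘L blockL2 (julia D DD) 0 0 X ∘L fstProdL2 (N†) DNs := by
    rw [show T = blockL2 D C (C†) F from hT, hC, hF]
    exact blockL2_eq_adjoint_fstProdL2_comp_blockL2_julia_comp hDDsa N hDNssa X
  have hF'W : F' = W† ∘L blockL2 1 0 0 X ∘L W := by
    rw [adjoint_prodL2_comp_blockL2_comp_prodL2, adjoint_adjoint, hDNssa.adjoint_eq, hF', hF]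
    simp only [add_comp, comp_add]
    abel
  have hF''W : F'' = W† ∘L blockL2 (-1) 0 0 X ∘L W := by
    rw [adjoint_prodL2_comp_blockL2_comp_prodL2, adjoint_adjoint, hDNssa.adjoint_eq, hF'', hF]
    simp only [sub_comp, neg_comp, comp_sub, comp_neg]
    abel
  obtain ⟨hTsa, hTn⟩ :=
    hTV ▸ isSelfAdjoint_adjoint_comp_blockL2_comp_and_norm_le_one hVn hJsa hXsa hJn hXc
  obtain ⟨hF'sa, hF'n⟩ := hF'W ▸ isSelfAdjoint_adjoint_comp_blockL2_comp_and_norm_le_one hWn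
    (.one _) hXsa norm_id_le hXc
  obtain ⟨hF''sa, hF''n⟩ := hF''W ▸ isSelfAdjoint_adjoint_comp_blockL2_comp_and_norm_le_one hWn
    (.neg (.one _)) hXsa (by rw [norm_neg]; exact norm_id_le) hXc
  refine ⟨hTsa, hTn, hF'sa, hF'n, hF''sa, hF''n, ?_⟩
  rw [hF', hF'', add_comp, sub_comp, one_def, id_comp, comp_add, comp_sub, two_smul]
  abel

/-- Parametrization of selfadjoint contractive 2×2 block operators: with `D` a
selfadjoint contraction on `M`, defect operators `D_D = (I-D²)^{1/2}` (encoded by `DD`)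
and `D_{N*} = (I-NN*)^{1/2}` (encoded by `DNs`), `N` a contraction of the closure of
`ran D_D` into `K` (extended by `0`), `X` a selfadjoint contraction on the closure of
`ran D_{N*}` (extended by `0`), `C = D_D N*`, `F = -NDN* + D_{N*} X D_{N*}`, the block
operator `T = [[D, C],[C*, F]]` on `M ⊕₂ K` is a selfadjoint contraction, and
`F' = F + N(I+D)N*`, `F'' = F - N(I-D)N*` are selfadjoint contractions with
`F' - F'' = 2NN*`. -/
theorem stmt_18 {M K : Type*} [NormedAddCommGroup M] [InnerProductSpace ℂ M] [CompleteSpace M]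
    [NormedAddCommGroup K] [InnerProductSpace ℂ K] [CompleteSpace K]
    (D : M →L[ℂ] M) (hDsa : IsSelfAdjoint D) (hDc : ‖D‖ ≤ 1)
    (DD : M →L[ℂ] M) (hDDsa : IsSelfAdjoint DD) (hDDnn : ∀ f : M, 0 ≤ (⟪DD f, f⟫).re)
    (hDDsq : DD ∘L DD = 1 - D ∘L D)
    (N : M →L[ℂ] K) (hN : ‖N‖ ≤ 1) (hN0 : ∀ m : M, DD m = 0 → N m = 0)
    (DNs : K →L[ℂ] K) (hDNssa : IsSelfAdjoint DNs) (hDNsnn : ∀ g : K, 0 ≤ (⟪DNs g, g⟫).re)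
    (hDNssq : DNs ∘L DNs = 1 - N ∘L N.adjoint)
    (X : K →L[ℂ] K) (hXsa : IsSelfAdjoint X) (hXc : ‖X‖ ≤ 1)
    (hX0 : ∀ g : K, DNs g = 0 → X g = 0)
    (C : K →L[ℂ] M) (hC : C = DD ∘L N.adjoint)
    (F : K →L[ℂ] K) (hF : F = -(N ∘L D ∘L N.adjoint) + DNs ∘L X ∘L DNs)
    (T : WithLp 2 (M × K) →L[ℂ] WithLp 2 (M × K))
    (hT : T =
      ((WithLp.prodContinuousLinearEquiv 2 ℂ M K).symm : M × K →L[ℂ] WithLp 2 (M × K)) ∘L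
        ((((D ∘L ContinuousLinearMap.fst ℂ M K) + (C ∘L ContinuousLinearMap.snd ℂ M K)).prod
          ((C.adjoint ∘L ContinuousLinearMap.fst ℂ M K) +
            (F ∘L ContinuousLinearMap.snd ℂ M K))) ∘L
          ((WithLp.prodContinuousLinearEquiv 2 ℂ M K) : WithLp 2 (M × K) →L[ℂ] M × K)))
    (F' F'' : K →L[ℂ] K)
    (hF' : F' = F + N ∘L (1 + D) ∘L N.adjoint)
    (hF'' : F'' = F - N ∘L (1 - D) ∘L N.adjoint) :
    IsSelfAdjoint T ∧ ‖T‖ ≤ 1 ∧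
    IsSelfAdjoint F' ∧ ‖F'‖ ≤ 1 ∧ IsSelfAdjoint F'' ∧ ‖F''‖ ≤ 1 ∧
    F' - F'' = (2 : ℂ) • (N ∘L N.adjoint) :=
  stmt_18_general D hDsa DD hDDsa hDDnn hDDsq N DNs hDNssa hDNssq X hXsa hXc C hC F hF T hT F' F''
    hF' hF''
end
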